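/- arXiv:1712.04607 — 10 statements merged into one kernel-verified Lean document; each statement's English description precedes it below -/
import Mathlib

section
/- Let R be a ring (associative with 1). If -1 is a sum of three idempotents of R (i.e., there exist e, f, g in R with e^2 = e, f^2 = f, g^2 = g and e + f + g = -1), then 60 = 0 in R (equivalently, 2^2 · 3 · 5 · 1_R = 0). -/
theorem aux60 (R : Type*) [Ring R] (e f : R) (he : e * e = e) (hf : f * f = f)
    (hA : e*f + f*e = -2 - 4*e - 4*f) : 60 * e = 0 := by
  have hB : e*f*e = -6*e - 5*(e*f) := by
    linear_combination (norm := noncomm_ring) e*hA - he*f - 4*he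
  have hB' : f*e*f = -6*f - 5*(f*e) := by
    linear_combination (norm := noncomm_ring) f*hA - hf*e - 4*hf
  have hC : 6*(e*f*e) = -6*e := by
    linear_combination (norm := noncomm_ring) e*hA*e - he*(f*e) - (e*f)*he - 6*he - 4*(e*he)
  have hD : 30*(e*f) = -30*e := by
    linear_combination (norm := noncomm_ring) 6*hB - hC
  have hsq : (e*f + f*e)*(e*f + f*e) = (-2 - 4*e - 4*f)*(-2 - 4*e - 4*f) := by rw [hA]
  have hU : (e*f)*(e*f) = -11*(e*f) := by
    linear_combination (norm := noncomm_ring) hB*f - 5*(e*hf)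
  have hV : (f*e)*(f*e) = -11*(f*e) := by
    linear_combination (norm := noncomm_ring) hB'*e - 5*(f*he)
  have hUV : (e*f)*(f*e) = -6*e - 5*(e*f) := by
    linear_combination (norm := noncomm_ring) e*hf*e + hB
  have hVU : (f*e)*(e*f) = -6*f - 5*(f*e) := by
    linear_combination (norm := noncomm_ring) f*he*f + hB'
  have hD60 : (60:R) + 90*e + 90*f = 0 := by
    linear_combination (norm := ((try noncomm_ring); (try simp); (try norm_num)))
      hsq - hU - hUV - hVU - hV + 16*he + 16*hf + 32*hA
  linear_combination (norm := noncomm_ring) e*hD60 - 90*he - 3*hD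

/-- If `-1` is a sum of three idempotents in a ring `R`, then `60 = 0` in `R`. -/
theorem neg_one_sum_three_idempotents (R : Type*) [Ring R]
    (e f g : R) (he : e * e = e) (hf : f * f = f) (hg : g * g = g)
    (h : e + f + g = -1) : (60 : R) = 0 := by
  have hAef : e*f + f*e = -2 - 4*e - 4*f := by
    linear_combination (norm := ((try noncomm_ring); (try simp); (try norm_num)))
      hg - he - hf + h*(e+f+2) - g*h
  have hAge : g*e + e*g = -2 - 4*g - 4*e := by
    linear_combination (norm := ((try noncomm_ring); (try simp); (try norm_num)))
      hf - hg - he + h*(g+e+2) - f*h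
  have hAfe : f*e + e*f = -2 - 4*f - 4*e := by
    linear_combination (norm := noncomm_ring) hAef
  have h60e := aux60 R e f he hf hAef
  have h60f := aux60 R f e hf he hAfe
  have h60g := aux60 R g e hg he hAge
  linear_combination (norm := ((try noncomm_ring); (try simp); (try norm_num)))
    60*h - h60e - h60f - h60g
end

section
/- Let n ≥ 1 and let F be a field. If every invertible matrix in the n×n matrix ring M_n(F) is a sum of three idempotent matrices, then F is isomorphic to the prime field Z_p for some p ∈ {2, 3, 5}. -/
section Aux

variable {F : Type*} [Field F] {M : Type*} [Ring M] [Algebra F M]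

private lemma aux_smul_cancel (α : F) (hα : α ≠ 0) {X : M} (h : α • X = 0) : X = 0 := by
  calc X = α⁻¹ • (α • X) := by rw [smul_smul, inv_mul_cancel₀ hα, one_smul]
  _ = 0 := by rw [h, smul_zero]

private lemma aux_pair (α : F) (e1 e2 e3 : M) (h1 : e1*e1 = e1) (h2 : e2*e2 = e2)
    (h3 : e3*e3 = e3) (hsum : e1 + e2 + e3 = α • 1) :
    e1*e3 + e3*e1 = (α - α*α) • 1 + (2*α-2) • e1 + (2*α-2) • e3 := by
  have he2 : e2 = α • (1:M) - e1 - e3 := by rw [← hsum]; abel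
  have h2' : (α•1 - e1 - e3) * (α•1 - e1 - e3) = α•(1:M) - e1 - e3 := by
    rw [← he2]; exact h2
  simp only [sub_mul, mul_sub, smul_mul_assoc, mul_smul_comm, smul_sub, one_mul, mul_one,
    smul_smul, h1, h3] at h2'
  linear_combination (norm := module) h2'

private lemma aux_comm (α : F) (hd : 2*α - 3 ≠ 0) (x y : M) (hx : x*x = x)
    (P : x*y + y*x = (α - α*α) • 1 + (2*α-2) • x + (2*α-2) • y) : x*y = y*x := by
  have A1 := congrArg (fun z => x * z) P
  have A2 := congrArg (fun z => z * x) P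
  simp only [mul_add, add_mul, mul_smul_comm, smul_mul_assoc, mul_one, one_mul,
    ← mul_assoc, hx] at A1 A2
  rw [mul_assoc y x x, hx] at A2
  have key : (2*α - 3) • (x*y - y*x) = 0 := by
    linear_combination (norm := module) A2 - A1
  have h0 := aux_smul_cancel _ hd key
  rwa [sub_eq_zero] at h0

private lemma aux_eq (α : F) (x y : M) (hx : x*x = x) (hy : y*y = y) (hcomm : x*y = y*x)
    (P : x*y + y*x = (α - α*α) • 1 + (2*α-2) • x + (2*α-2) • y) :
    ((α - α*α) + (2*α-2)) • (x - y) = 0 := by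
  have A1 := congrArg (fun z => x * z) P
  have A2 := congrArg (fun z => z * y) P
  simp only [mul_add, add_mul, mul_smul_comm, smul_mul_assoc, mul_one, one_mul,
    ← mul_assoc, hx, hy] at A1 A2
  -- A1 : x*y + x*y*x = (α-α*α)•x + (2α-2)•x + (2α-2)•(x*y)
  -- A2 : x*y + y*x*y = (α-α*α)•y + (2α-2)•(x*y) + (2α-2)•y
  have e1 : x*y*x = x*y := by rw [mul_assoc, ← hcomm, ← mul_assoc, hx]
  have e2 : y*x*y = x*y := by rw [← hcomm, mul_assoc, hy]
  rw [e1] at A1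
  rw [e2, mul_assoc x y y, hy] at A2
  linear_combination (norm := module) A2 - A1

private lemma aux_core [Nontrivial M] (α : F) (hα : α ≠ 0) (hd : 2*α - 3 ≠ 0)
    (e1 e2 e3 : M) (h1 : e1*e1 = e1) (h2 : e2*e2 = e2) (h3 : e3*e3 = e3)
    (hsum : e1 + e2 + e3 = α • 1) : (α-1)*(α-2)*(α-3) = 0 := by
  have P13 := aux_pair α e1 e2 e3 h1 h2 h3 hsum
  have hsum' : e1 + e3 + e2 = α • (1:M) := by rw [← hsum]; abel
  have P12 := aux_pair α e1 e3 e2 h1 h3 h2 hsum'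
  have c13 := aux_comm α hd e1 e3 h1 P13
  have c12 := aux_comm α hd e1 e2 h1 P12
  have E13 := aux_eq α e1 e3 h1 h3 c13 P13
  have E12 := aux_eq α e1 e2 h1 h2 c12 P12
  by_cases hc : (α - α*α) + (2*α-2) = 0
  · have h12 : (α-1)*(α-2) = 0 := by linear_combination -hc
    linear_combination (α-3) * h12
  · have he13 : e1 = e3 := by
      have := aux_smul_cancel _ hc E13; rwa [sub_eq_zero] at this
    have he12 : e1 = e2 := by
      have := aux_smul_cancel _ hc E12; rwa [sub_eq_zero] at this
    have hsum3 : e1 + e1 + e1 = α • (1:M) := by rw [← hsum, ← he12, ← he13]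
    have l2 : (e1+e1+e1) * (e1+e1+e1) = (3:F) • (e1+e1+e1) := by
      simp only [add_mul, mul_add, h1]; module
    rw [hsum3] at l2
    have l1 : (α•(1:M)) * (α•1) = (α*α) • 1 := by
      rw [smul_mul_assoc, mul_smul_comm, smul_smul, one_mul]
    rw [l1, smul_smul] at l2
    have h0 : ((α*α) - 3*α) • (1:M) = 0 := by rw [sub_smul, l2, sub_self]
    have hsc : α*α - 3*α = 0 := by
      by_contra hne
      exact one_ne_zero (aux_smul_cancel _ hne h0)
    have : α * (α - 3) = 0 := by linear_combination hsc
    rcases mul_eq_zero.mp this with h' | h'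
    · exact absurd h' hα
    · rw [show α - 3 = 0 from h']; ring

end Aux

/-- If every invertible `n × n` matrix over a field `F` is a sum of three idempotent
matrices, then `F ≅ ℤ/p` for some `p ∈ {2, 3, 5}`. -/
theorem field_of_invertible_sum_three_idempotents (F : Type*) [Field F] (n : ℕ) (hn : 1 ≤ n)
    (h : ∀ A : Matrix (Fin n) (Fin n) F, IsUnit A →
      ∃ E₁ E₂ E₃ : Matrix (Fin n) (Fin n) F,
        E₁ * E₁ = E₁ ∧ E₂ * E₂ = E₂ ∧ E₃ * E₃ = E₃ ∧ A = E₁ + E₂ + E₃) :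
    ∃ p : ℕ, (p = 2 ∨ p = 3 ∨ p = 5) ∧ Nonempty (F ≃+* ZMod p) := by
  haveI : Nonempty (Fin n) := ⟨⟨0, hn⟩⟩
  haveI : Nontrivial (Matrix (Fin n) (Fin n) F) := by infer_instance
  -- key classification
  have key : ∀ α : F, α = 0 ∨ 2*α - 3 = 0 ∨ (α-1)*(α-2)*(α-3) = 0 := by
    intro α
    by_cases h0 : α = 0
    · exact Or.inl h0
    by_cases hdd : 2*α - 3 = 0
    · exact Or.inr (Or.inl hdd)
    refine Or.inr (Or.inr ?_)
    have hunit : IsUnit (α • (1 : Matrix (Fin n) (Fin n) F)) := by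
      refine ⟨⟨α • 1, α⁻¹ • 1, ?_, ?_⟩, rfl⟩
      · rw [smul_mul_assoc, mul_smul_comm, smul_smul, one_mul, mul_inv_cancel₀ h0, one_smul]
      · rw [smul_mul_assoc, mul_smul_comm, smul_smul, one_mul, inv_mul_cancel₀ h0, one_smul]
    obtain ⟨E1, E2, E3, hE1, hE2, hE3, hA⟩ := h _ hunit
    exact aux_core α h0 hdd E1 E2 E3 hE1 hE2 hE3 hA.symm
  -- characteristic
  have h120 : (120 : F) = 0 := by
    rcases key 4 with h' | h' | h'
    · linear_combination (30:F) * h'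
    · linear_combination (24:F) * h'
    · linear_combination (20:F) * h'
  set p := ringChar F with hpdef
  haveI hcp : CharP F p := ringChar.charP F
  have hdvd : p ∣ 120 := (CharP.cast_eq_zero_iff F p 120).mp h120
  have hp : p.Prime := by
    rcases CharP.char_is_prime_or_zero F p with hp | hp
    · exact hp
    · rw [hp] at hdvd; simp at hdvd
  have hp235 : p = 2 ∨ p = 3 ∨ p = 5 := by
    have h815 : p ∣ 8 * 15 := by norm_num; exact hdvd
    rcases (Nat.Prime.dvd_mul hp).mp h815 with h8 | h15
    · left
      have h2 : p ∣ 2 := hp.dvd_of_dvd_pow (show p ∣ 2 ^ 3 by norm_num; exact h8)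
      exact (Nat.prime_dvd_prime_iff_eq hp Nat.prime_two).mp h2
    · have h35 : p ∣ 3 * 5 := by norm_num; exact h15
      rcases (Nat.Prime.dvd_mul hp).mp h35 with h3 | h5
      · exact Or.inr (Or.inl ((Nat.prime_dvd_prime_iff_eq hp Nat.prime_three).mp h3))
      · exact Or.inr (Or.inr ((Nat.prime_dvd_prime_iff_eq hp (by norm_num)).mp h5))
  haveI : Fact p.Prime := ⟨hp⟩
  set f : ZMod p →+* F := ZMod.castHom (dvd_refl p) F with hfdef
  have hsurj : Function.Surjective f := by
    intro β
    rcases key β with h0 | hd | hprod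
    · exact ⟨0, by rw [map_zero, h0]⟩
    · -- 2β = 3
      have h2F : (2:F) ≠ 0 := by
        intro h2
        have h3F : (3:F) = 0 := by linear_combination -hd + β * h2
        have : (1:F) = 0 := by linear_combination h3F - h2
        exact one_ne_zero this
      have hf2 : f 2 = (2:F) := by rw [map_ofNat]
      have h2Z : (2 : ZMod p) ≠ 0 := by
        intro hz; rw [hz, map_zero] at hf2; exact h2F hf2.symm
      refine ⟨3 * 2⁻¹, ?_⟩
      have hcalc : f (3 * 2⁻¹) * 2 = 3 := by
        rw [← hf2, ← map_mul, mul_assoc, inv_mul_cancel₀ h2Z, mul_one, map_ofNat]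
      have hb : β * 2 = 3 := by linear_combination hd
      exact mul_right_cancel₀ h2F (hcalc.trans hb.symm)
    · rcases mul_eq_zero.mp hprod with h12 | h3
      · rcases mul_eq_zero.mp h12 with h1' | h2'
        · exact ⟨1, by rw [map_one]; exact (sub_eq_zero.mp h1').symm⟩
        · refine ⟨2, ?_⟩
          rw [map_ofNat]
          exact (sub_eq_zero.mp h2').symm
      · refine ⟨3, ?_⟩
        rw [map_ofNat]
        exact (sub_eq_zero.mp h3).symm
  exact ⟨p, hp235, ⟨(RingEquiv.ofBijective f ⟨f.injective, hsurj⟩).symm⟩⟩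
end

section
/- Let n = 2k be a positive even integer. Then the matrix -I_n in M_n(Z_5) is a sum of three idempotent matrices; explicitly, -I_n equals the block matrix [[I_k, 0],[0, 0]] plus [[-I_k, I_k],[-2I_k, 2I_k]] plus [[-I_k, -I_k],[2I_k, 2I_k]], and each of these three block matrices is idempotent in M_n(Z_5). -/
/-- For `n = 2k` a positive even integer, `-I_n` is a sum of three idempotent matrices
over `ℤ/5`; explicitly, `-I_n = [[1,0],[0,0]] + [[-1,1],[-2,2]] + [[-1,-1],[2,2]]`
in `k × k` block form, and each of the three block matrices is idempotent. -/
theorem neg_one_matrix_sum_three_idempotents_zmod5 (k : ℕ) (hk : 0 < k) :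
    let E₁ : Matrix (Fin k ⊕ Fin k) (Fin k ⊕ Fin k) (ZMod 5) :=
      Matrix.fromBlocks 1 0 0 0
    let E₂ : Matrix (Fin k ⊕ Fin k) (Fin k ⊕ Fin k) (ZMod 5) :=
      Matrix.fromBlocks (-1) 1 (-2) 2
    let E₃ : Matrix (Fin k ⊕ Fin k) (Fin k ⊕ Fin k) (ZMod 5) :=
      Matrix.fromBlocks (-1) (-1) 2 2
    E₁ * E₁ = E₁ ∧ E₂ * E₂ = E₂ ∧ E₃ * E₃ = E₃ ∧
      E₁ + E₂ + E₃ = -(1 : Matrix (Fin k ⊕ Fin k) (Fin k ⊕ Fin k) (ZMod 5)) := by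
  intro E₁ E₂ E₃
  have h4 : (2 + 2 : Matrix (Fin k) (Fin k) (ZMod 5)) = -1 := by
    have : (2 + 2 : Matrix (Fin k) (Fin k) (ZMod 5)) = 4 := by norm_num
    rw [this, (map_ofNat (Matrix.scalar (Fin k)) 4).symm, show (4 : ZMod 5) = -1 by decide,
      map_neg, map_one]
  have hneg := (Matrix.fromBlocks_neg (1 : Matrix (Fin k) (Fin k) (ZMod 5))
    (0 : Matrix (Fin k) (Fin k) (ZMod 5)) (0 : Matrix (Fin k) (Fin k) (ZMod 5))
    (1 : Matrix (Fin k) (Fin k) (ZMod 5)))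
  simp only [neg_zero] at hneg
  refine ⟨?_, ?_, ?_, ?_⟩
  · simp only [E₁, Matrix.fromBlocks_multiply]
    congr 1 <;> norm_num
  · simp only [E₂, Matrix.fromBlocks_multiply]
    congr 1 <;> norm_num
  · simp only [E₃, Matrix.fromBlocks_multiply]
    congr 1 <;> norm_num
  · simp only [E₁, E₂, E₃, Matrix.fromBlocks_add]
    rw [show (1 + -1 + -1 : Matrix (Fin k) (Fin k) (ZMod 5)) = -1 by norm_num,
      show (0 + 1 + -1 : Matrix (Fin k) (Fin k) (ZMod 5)) = 0 by norm_num,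
      show (0 + -2 + 2 : Matrix (Fin k) (Fin k) (ZMod 5)) = 0 by norm_num,
      show (0 + 2 + 2 : Matrix (Fin k) (Fin k) (ZMod 5)) = -1 by rw [zero_add, h4],
      ← hneg, Matrix.fromBlocks_one]
end

section
/- Let p be a prime number greater than 3 and let n be a positive integer. If -I_n is a sum of three idempotent matrices of M_n(Z_p), then p = 5 and n is even. -/
section
variable {R : Type*} [Ring R]

private lemma keyRel' {X Y : R} (hX : X*X = X) (hY : Y*Y = Y)
    (hrel : (-1 - X - Y) * (-1 - X - Y) = -1 - X - Y) :
    X*Y + Y*X = -2 - 4*X - 4*Y := by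
  have e : X*Y + Y*X = (-1 - X - Y) * (-1 - X - Y) - (1 + X + Y + X + X*X + Y + Y*Y) := by
    noncomm_ring
  rw [hrel, hX, hY] at e
  rw [e]; noncomm_ring; simp; abel

private lemma mulA' {X Y : R} (hX : X*X = X)
    (key : X*Y + Y*X = -2 - 4*X - 4*Y) : X*Y*X = -6*X - 5*(X*Y) := by
  have e : X*Y*X = X*(X*Y + Y*X) - X*X*Y := by noncomm_ring
  rw [key, hX] at e
  have e2 : X*(-2 - 4*X - 4*Y) - X*Y = -2*X - 4*(X*X) - 5*(X*Y) := by noncomm_ring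
  rw [hX] at e2
  rw [e, e2]; noncomm_ring

private lemma mulB' {X Y : R} (hX : X*X = X)
    (key : X*Y + Y*X = -2 - 4*X - 4*Y) : X*Y*X = -6*X - 5*(Y*X) := by
  have e : X*Y*X = (X*Y + Y*X)*X - Y*(X*X) := by noncomm_ring
  rw [key, hX] at e
  have e2 : (-2 - 4*X - 4*Y)*X - Y*X = -2*X - 4*(X*X) - 5*(Y*X) := by noncomm_ring
  rw [hX] at e2
  rw [e, e2]; noncomm_ring

private lemma Tsq' {X Y : R} (hX : X*X = X) (hY : Y*Y = Y)
    (key : X*Y + Y*X = -2 - 4*X - 4*Y) :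
    (X*Y - Y*X) * (X*Y - Y*X) = 12 + 30*X + 30*Y := by
  have key' : Y*X + X*Y = -2 - 4*Y - 4*X := by rw [add_comm, key]; noncomm_ring
  have a1 : X*Y*X = -6*X - 5*(X*Y) := mulA' hX key
  have a2 : Y*X*Y = -6*Y - 5*(Y*X) := mulA' hY key'
  have e : (X*Y - Y*X) * (X*Y - Y*X)
      = (X*Y*X)*Y - X*(Y*Y)*X - Y*(X*X)*Y + (Y*X*Y)*X := by noncomm_ring
  rw [hX, hY, a1, a2] at e
  rw [e]
  have e2 : (-6*X - 5*(X*Y))*Y - (-6*X - 5*(X*Y)) - (-6*Y - 5*(Y*X)) + (-6*Y - 5*(Y*X))*X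
      = -6*(X*Y + Y*X) - 5*(X*(Y*Y)) - 5*(Y*(X*X)) + 6*X + 5*(X*Y) + 6*Y + 5*(Y*X) := by
    noncomm_ring
  rw [e2, hX, hY, key]
  noncomm_ring
  simp [nsmul_eq_mul]; norm_num; abel

private lemma zc30 : ((30:ℕ) : ZMod 5) = 0 := by decide
private lemma zc12 : ((12:ℕ) : ZMod 5) = 2 := by decide
private lemma z2ne : (2 : ZMod 5) ≠ 0 := by decide
private lemma znosq : ∀ d e : ZMod 5, e ≠ 0 → d * d ≠ e * e * 2 := by decide

end

/-- Let `p > 3` be a prime and `n ≥ 1`.  If `-I_n` is a sum of three idempotent matrices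
of `M_n(ℤ/p)`, then `p = 5` and `n` is even. -/
theorem neg_one_sum_three_idempotent_matrices_zmod (p : ℕ) (hp : p.Prime) (hp3 : 3 < p)
    (n : ℕ) (hn : 0 < n)
    (h : ∃ E₁ E₂ E₃ : Matrix (Fin n) (Fin n) (ZMod p),
      E₁ * E₁ = E₁ ∧ E₂ * E₂ = E₂ ∧ E₃ * E₃ = E₃ ∧
        (-1 : Matrix (Fin n) (Fin n) (ZMod p)) = E₁ + E₂ + E₃) :
    p = 5 ∧ Even n := by
  haveI : Fact p.Prime := ⟨hp⟩
  obtain ⟨E₁, X, Y, h1, hX, hY, hsum⟩ := h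
  have hE1 : E₁ = -1 - X - Y := by rw [hsum]; abel
  rw [hE1] at h1
  have key : X*Y + Y*X = -2 - 4*X - 4*Y := keyRel' hX hY h1
  have natMul : ∀ (c : ℕ) (A : Matrix (Fin n) (Fin n) (ZMod p)),
      (c : Matrix (Fin n) (Fin n) (ZMod p)) * A = (c : ZMod p) • A := fun c A => by
    rw [← nsmul_eq_mul, Nat.cast_smul_eq_nsmul]
  by_cases hp5 : p = 5
  · subst hp5
    refine ⟨rfl, ?_⟩
    have hT : (X*Y - Y*X) * (X*Y - Y*X) = 12 + 30*X + 30*Y := Tsq' hX hY key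
    have h30 : (30 : Matrix (Fin n) (Fin n) (ZMod 5)) = 0 := by
      rw [show (30 : Matrix (Fin n) (Fin n) (ZMod 5)) = ((30:ℕ) : Matrix (Fin n) (Fin n) (ZMod 5)) from by norm_cast,
        ← mul_one ((30:ℕ) : Matrix (Fin n) (Fin n) (ZMod 5)), natMul, zc30, zero_smul]
    have h12 : (12 : Matrix (Fin n) (Fin n) (ZMod 5)) = (2 : ZMod 5) • 1 := by
      rw [show (12 : Matrix (Fin n) (Fin n) (ZMod 5)) = ((12:ℕ) : Matrix (Fin n) (Fin n) (ZMod 5)) from by norm_cast,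
        ← mul_one ((12:ℕ) : Matrix (Fin n) (Fin n) (ZMod 5)), natMul, zc12]
    rw [h30, h12] at hT
    simp only [zero_mul, add_zero] at hT
    have hdet : (X*Y - Y*X).det * (X*Y - Y*X).det = 2 ^ n := by
      rw [← Matrix.det_mul, hT, Matrix.det_smul, Matrix.det_one, Fintype.card_fin, mul_one]
    rcases Nat.even_or_odd n with he | ho
    · exact he
    · exfalso
      obtain ⟨k, hk⟩ := ho
      apply znosq (X*Y - Y*X).det ((2:ZMod 5)^k) (pow_ne_zero _ z2ne)
      rw [hdet, hk]; ring
  · exfalso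
    have hdvd : ∀ c : ℕ, (c : ZMod p) = 0 → p ∣ c := fun c hc =>
      (ZMod.natCast_eq_zero_iff c p).mp hc
    have h5ne : ((5:ℕ) : ZMod p) ≠ 0 := fun hc =>
      hp5 ((Nat.prime_dvd_prime_iff_eq hp (by norm_num)).mp (hdvd 5 hc))
    have h2ne : ((2:ℕ) : ZMod p) ≠ 0 := fun hc => by
      have := Nat.le_of_dvd (by norm_num) (hdvd 2 hc); omega
    have h6ne : ((6:ℕ) : ZMod p) ≠ 0 := by
      intro hc
      have h6 : p ∣ 2 * 3 := by simpa using hdvd 6 hc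
      rcases (Nat.Prime.dvd_mul hp).mp h6 with hd | hd <;>
        · have := Nat.le_of_dvd (by norm_num) hd; omega
    have a1 : X*Y*X = -6*X - 5*(X*Y) := mulA' hX key
    have b1 : X*Y*X = -6*X - 5*(Y*X) := mulB' hX key
    have hab := a1.symm.trans b1
    have e5 : (5 : Matrix (Fin n) (Fin n) (ZMod p))*(X*Y) - 5*(Y*X)
        = (-6*X - 5*(Y*X)) - (-6*X - 5*(X*Y)) := by noncomm_ring
    rw [← hab, sub_self] at e5
    have hcomm : X*Y = Y*X := by
      have e5' := sub_eq_zero.mp e5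
      rw [show (5 : Matrix (Fin n) (Fin n) (ZMod p)) = ((5:ℕ) : Matrix (Fin n) (Fin n) (ZMod p)) from by norm_cast,
        natMul, natMul] at e5'
      exact smul_right_injective _ h5ne e5'
    have hXYX : X*Y*X = X*Y := by rw [hcomm, mul_assoc, hX]
    rw [hXYX] at a1
    have key' : Y*X + X*Y = -2 - 4*Y - 4*X := by rw [add_comm, key]; noncomm_ring
    have a2 : Y*X*Y = -6*Y - 5*(Y*X) := mulA' hY key'
    have hYXY : Y*X*Y = Y*X := by rw [← hcomm, mul_assoc, hY, hcomm]
    rw [hYXY] at a2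
    -- a1 : X*Y = -6*X - 5*(X*Y), a2 : Y*X = -6*Y - 5*(Y*X)
    have cancel6 : ∀ A B : Matrix (Fin n) (Fin n) (ZMod p),
        A = -6*B - 5*A → A = -B := by
      intro A B hA
      have e6 : (6 : Matrix (Fin n) (Fin n) (ZMod p))*(A + B) = A - (-6*B - 5*A) := by
        noncomm_ring
      rw [← hA, sub_self] at e6
      rw [show (6 : Matrix (Fin n) (Fin n) (ZMod p)) = ((6:ℕ) : Matrix (Fin n) (Fin n) (ZMod p)) from by norm_cast,
        natMul] at e6
      rcases smul_eq_zero.mp e6 with hc | hc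
      · exact absurd hc h6ne
      · exact eq_neg_of_add_eq_zero_left hc
    have hXY : X*Y = -X := cancel6 (X*Y) X a1
    have hYX : Y*X = -Y := cancel6 (Y*X) Y a2
    have hXeqY : X = Y := by
      have : -X = -Y := by rw [← hXY, hcomm, hYX]
      exact neg_injective this
    have hXnegX : X = -X := by
      have h' : X*X = -X := by rw [← hXeqY] at hXY; exact hXY
      exact hX.symm.trans h'
    have e2m : (2 : Matrix (Fin n) (Fin n) (ZMod p))*X = X - (-X) := by noncomm_ring
    rw [← hXnegX, sub_self] at e2m
    rw [show (2 : Matrix (Fin n) (Fin n) (ZMod p)) = ((2:ℕ) : Matrix (Fin n) (Fin n) (ZMod p)) from by norm_cast,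
      natMul] at e2m
    have hX0 : X = 0 := by
      rcases smul_eq_zero.mp e2m with hc | hc
      · exact absurd hc h2ne
      · exact hc
    have hY0 : Y = 0 := by rw [← hXeqY]; exact hX0
    rw [hX0, hY0] at key
    simp only [mul_zero, zero_mul, add_zero, sub_zero] at key
    -- key : 0 = -2
    have h2z : ((2:ℕ) : Matrix (Fin n) (Fin n) (ZMod p)) = 0 := by
      have : (2 : Matrix (Fin n) (Fin n) (ZMod p)) = 0 := by
        have := congrArg Neg.neg key
        simpa using this.symm
      rw [← this]; norm_cast
    rw [← mul_one ((2:ℕ) : Matrix (Fin n) (Fin n) (ZMod p)), natMul] at h2z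
    rcases smul_eq_zero.mp h2z with hc | hc
    · exact h2ne hc
    · have := congrFun (congrFun hc ⟨0, hn⟩) ⟨0, hn⟩
      simp [Matrix.one_apply_eq] at this
end

section
/- Let R be a commutative local ring and n ≥ 1. If E is an idempotent matrix in M_n(R) (E^2 = E), then the trace of E lies in the image of the canonical ring homomorphism ℤ → R, i.e., tr(E) = k · 1_R for some integer k (namely k = rank(E)). -/
/-- Over a commutative local ring `R`, the trace of an idempotent `n × n` matrix lies in
the image of the canonical map `ℤ → R`, i.e. `tr(E) = k • 1_R` for some integer `k`. -/
theorem trace_idempotent_matrix_local_ring (R : Type*) [CommRing R] [IsLocalRing R]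
    (n : ℕ) (hn : 1 ≤ n) (E : Matrix (Fin n) (Fin n) R) (hE : E * E = E) :
    ∃ k : ℤ, Matrix.trace E = (k : R) := by
  classical
  set f : Module.End R (Fin n → R) := Matrix.toLin' E with hf
  have hff : f * f = f := by
    rw [hf, Module.End.mul_eq_comp, ← Matrix.toLin'_mul, hE]
  have hfix : ∀ x ∈ LinearMap.range f, f x = x := by
    rintro x ⟨y, rfl⟩
    exact DFunLike.congr_fun hff y
  -- range f is a direct summand, hence projective, finite, free
  have hproj : Module.Projective R (LinearMap.range f) := by
    refine Module.Projective.of_split (LinearMap.range f).subtype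
      (f.codRestrict _ fun x => LinearMap.mem_range_self f x) ?_
    refine LinearMap.ext fun x => Subtype.ext ?_
    exact hfix x x.2
  have hfin : Module.Finite R (LinearMap.range f) :=
    Module.Finite.range f
  set g : Module.End R (Fin n → R) := 1 - f with hgdef
  have hgg : g * g = g := by
    simp [hgdef, mul_sub, sub_mul, hff]
  -- ker f = range g
  have hker_range : LinearMap.ker f = LinearMap.range g := by
    ext x
    constructor
    · intro hx
      refine ⟨x, ?_⟩
      simp [hgdef, LinearMap.mem_ker.mp hx]
    · rintro ⟨y, rfl⟩
      have : f (g y) = (f * g) y := rfl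
      rw [LinearMap.mem_ker, this]
      have : f * g = 0 := by
        simp [hgdef, mul_sub, hff]
      rw [this]
      rfl
  have hgfix : ∀ x ∈ LinearMap.range g, g x = x := by
    rintro x ⟨y, rfl⟩
    exact DFunLike.congr_fun hgg y
  have hprojk : Module.Projective R (LinearMap.ker f) := by
    rw [hker_range]
    refine Module.Projective.of_split (LinearMap.range g).subtype
      (g.codRestrict _ fun x => LinearMap.mem_range_self g x) ?_
    refine LinearMap.ext fun x => Subtype.ext ?_
    exact hgfix x x.2
  have hfink : Module.Finite R (LinearMap.ker f) := by
    rw [hker_range]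
    exact Module.Finite.range _
  have hfp1 : Module.FinitePresentation R (LinearMap.range f) :=
    Module.finitePresentation_of_projective R _
  have hfp2 : Module.FinitePresentation R (LinearMap.ker f) :=
    Module.finitePresentation_of_projective R _
  have hfree1 : Module.Free R (LinearMap.range f) :=
    Module.free_of_flat_of_isLocalRing
  have hfree2 : Module.Free R (LinearMap.ker f) :=
    Module.free_of_flat_of_isLocalRing
  have hIsProj : LinearMap.IsProj (LinearMap.range f) f :=
    ⟨fun x => LinearMap.mem_range_self f x, hfix⟩
  have htr := hIsProj.trace
  refine ⟨(Module.finrank R (LinearMap.range f) : ℤ), ?_⟩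
  have hEq : LinearMap.trace R (Fin n → R) f = Matrix.trace E := by
    rw [LinearMap.trace_eq_matrix_trace R (Pi.basisFun R (Fin n)), hf,
      LinearMap.toMatrix_eq_toMatrix', LinearMap.toMatrix'_toLin']
  rw [← hEq, htr]
  push_cast
  rfl
end

section
/- Let R be a commutative ring and n ≥ 1, and suppose that every matrix in M_n(R) is a sum of three idempotent matrices. Then the Jacobson radical J(R) is a nil ideal, and the quotient ring R/J(R) satisfies the identity x^3 = x (every element x of R/J(R) satisfies x^3 = x). -/
/-!
Modulo a prime ideal `p`, every matrix over the domain `R ⧸ p` is still a sum of three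
idempotents, and it suffices to show that then `c ^ 3 = c` in that domain: `x ^ 3 - x` is then
nilpotent for every `x : R`, hence lies in `J(R)`, and `x ∈ J(R)` is nilpotent because
`x - x ^ 3 = x (1 - x ^ 2)` with `1 - x ^ 2` a unit.

For idempotents `F`, `G` the difference `F - G` anticommutes with `Y = 1 - F - G`, and
`(F - G) ^ 2 = 1 - Y ^ 2`. If `c • 1 = E + F + G` then `Y = E - (c - 1)`; when `F - G` is invertible
it conjugates `Y` to `-Y`, and since `det (t - E) = 0` forces `t ∈ {0, 1}` this leaves
`c (c - 1) (c - 2) (c - 3) (2c - 3) = 0`. In characteristic `2` the trace of `c E₁₁` gives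
`c ^ 2 = c`, in characteristic `3` the scalar constraint already gives `c ^ 3 = c`, and otherwise
the domain is `𝔽₅`. Over `𝔽₅` some matrix is not a sum of three idempotents: for odd `n` the scalar `4`,
as `(F - G) ^ 2 = 2` would make `2` a square; for even `n` the matrix `diag (1, 4, …, 4)`, where
`det (F - G) ^ 2 = 2 ^ n (α ^ 2 + α + 3)` for the corner entry `α` of `E`, and where an invertible
`F - G` makes both `trace Y` and `trace (Y (F - G) ^ 2)` vanish; this forces `α ∈ {1, 3}` for each
of the three idempotents, whose corner entries cannot then add up to `1`.
-/

open Matrix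

def IsSumOfThreeIdempotents {M : Type*} [Semiring M] (a : M) : Prop :=
  ∃ e f g : M, IsIdempotentElem e ∧ IsIdempotentElem f ∧ IsIdempotentElem g ∧ a = e + f + g

theorem IsSumOfThreeIdempotents.map {M N F : Type*} [Semiring M] [Semiring N] [FunLike F M N]
    [RingHomClass F M N] (f : F) {a : M} (ha : IsSumOfThreeIdempotents a) :
    IsSumOfThreeIdempotents (f a) := by
  obtain ⟨e, g, h, he, hg, hh, rfl⟩ := ha
  exact ⟨f e, f g, f h, he.map f, hg.map f, hh.map f, by rw [map_add, map_add]⟩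

theorem Function.Surjective.forall_isSumOfThreeIdempotents {M N F : Type*} [Semiring M]
    [Semiring N] [FunLike F M N] [RingHomClass F M N] {f : F} (hf : Function.Surjective f)
    (h : ∀ a : M, IsSumOfThreeIdempotents a) (b : N) : IsSumOfThreeIdempotents b := by
  obtain ⟨a, rfl⟩ := hf b
  exact (h a).map f

namespace IsIdempotentElem

variable {M : Type*} [Ring M] {f g : M}

theorem sub_mul_one_sub_sub (hf : IsIdempotentElem f) (hg : IsIdempotentElem g) :
    (f - g) * (1 - f - g) = -((1 - f - g) * (f - g)) := by
  rw [← add_eq_zero_iff_eq_neg]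
  calc (f - g) * (1 - f - g) + (1 - f - g) * (f - g) = 2 • (g * g - g) - 2 • (f * f - f) := by
        noncomm_ring
    _ = 0 := by rw [hf.eq, hg.eq]; simp

theorem sub_mul_sub (hf : IsIdempotentElem f) (hg : IsIdempotentElem g) :
    (f - g) * (f - g) = 1 - (1 - f - g) * (1 - f - g) := by
  calc (f - g) * (f - g) = 1 - (1 - f - g) * (1 - f - g) + 2 • (f * f - f) + 2 • (g * g - g) := by
        noncomm_ring
    _ = 1 - (1 - f - g) * (1 - f - g) := by rw [hf.eq, hg.eq]; simp

end IsIdempotentElem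

section

variable {ι : Type*} [Fintype ι] [DecidableEq ι]

theorem RingHom.mapMatrix_surjective {R S : Type*} [CommRing R] [CommRing S] {f : R →+* S}
    (hf : Function.Surjective f) : Function.Surjective (f.mapMatrix : Matrix ι ι R →+* _) :=
  fun B => ⟨B.map (Function.surjInv hf), by ext; simp [Function.surjInv_eq]⟩

theorem IsSumOfThreeIdempotents.exists_trace_mul_self_eq {R : Type*} [CommRing R] {A : Matrix ι ι R}
    (hA : IsSumOfThreeIdempotents A) : ∃ k : R, trace (A * A) = trace A + 2 * k := by
  obtain ⟨E, F, G, hE, hF, hG, rfl⟩ := hA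
  refine ⟨trace (E * F) + trace (E * G) + trace (F * G), ?_⟩
  simp only [add_mul, mul_add, trace_add, hE.eq, hF.eq, hG.eq, trace_mul_comm F E,
    trace_mul_comm G E, trace_mul_comm G F]
  ring

theorem IsIdempotentElem.det_one_add_single_mul_add_mul_single {R : Type*} [CommRing R]
    {P : Matrix ι ι R} (hP : IsIdempotentElem P) (i : ι) :
    det (1 + (2 • single i i 1 + single i i 1 * P + P * single i i 1)) = P i i ^ 2 + P i i + 3 := by
  let U : Matrix ι (Fin 2) R := of fun k => ![(1 : Matrix ι ι R) k i, P k i]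
  let V : Matrix (Fin 2) ι R :=
    of ![fun l => 2 * (1 : Matrix ι ι R) i l + P i l, (1 : Matrix ι ι R) i]
  have hUV : 2 • single i i 1 + single i i 1 * P + P * single i i 1 = U * V := by
    ext k l
    by_cases hk : k = i <;> by_cases hl : l = i <;> subst_vars <;>
      simp [U, V, mul_apply, Fin.sum_univ_two, single_apply, one_apply, Ne.symm, *]
  have hPP : ∑ l, P i l * P l i = P i i := by rw [← mul_apply, hP.eq]
  have hVU : V * U = !![2 + P i i, 2 * P i i + P i i; 1, P i i] := by
    ext a b
    fin_cases a <;> fin_cases b <;>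
      simp [U, V, mul_apply, one_apply, add_mul, Finset.sum_add_distrib, hPP]
  rw [hUV, det_one_add_mul_comm, hVU, det_fin_two]
  simp only [Matrix.add_apply, one_apply_eq, one_apply_ne zero_ne_one, one_apply_ne one_ne_zero,
    of_apply, cons_val', cons_val_zero, cons_val_one, cons_val_fin_one]
  ring

section Domain

variable {D : Type*} [CommRing D] [IsDomain D]

theorem IsIdempotentElem.eq_zero_or_eq_one_of_det_smul_one_sub_eq_zero [Nonempty ι]
    {E : Matrix ι ι D} (hE : IsIdempotentElem E) {t : D} (h : det (t • 1 - E) = 0) :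
    t = 0 ∨ t = 1 := by
  have factor : (t • 1 - E) * ((t - 1) • 1 + E) = (t * (t - 1)) • (1 : Matrix ι ι D) := by
    simp only [sub_mul, mul_add, smul_mul_assoc, mul_smul_comm, one_mul, mul_one, hE.eq]
    module
  have hdet := congrArg det factor
  rw [det_mul, h, zero_mul, det_smul, det_one, mul_one, eq_comm,
    pow_eq_zero_iff Fintype.card_ne_zero, mul_eq_zero, sub_eq_zero] at hdet
  exact hdet

theorem IsIdempotentElem.det_neg_eq_zero_or_det_one_sub_eq_zero [Nonempty ι]
    {E : Matrix ι ι D} (hE : IsIdempotentElem E) : det (-E) = 0 ∨ det (1 - E) = 0 := by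
  have factor : -E * (1 - E) = 0 := by rw [neg_mul, mul_sub, mul_one, hE.eq, sub_self, neg_zero]
  rw [← mul_eq_zero, ← det_mul, factor, det_zero]

theorem det_neg_smul_one_sub_eq_zero_of_anticommute {Dm Y : Matrix ι ι D}
    (hY : Dm * Y = -(Y * Dm)) (hD : det Dm ≠ 0) {s : D} (h : det (s • 1 - Y) = 0) :
    det ((-s) • 1 - Y) = 0 := by
  have swap : Dm * (s • 1 - Y) = -(((-s) • 1 - Y) * Dm) := by
    rw [mul_sub, hY, sub_mul, mul_smul_comm, smul_mul_assoc, mul_one, one_mul, neg_smul]; abel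
  have hdet := congrArg det swap
  rw [det_mul, det_neg, det_mul, h, mul_zero, eq_comm, mul_eq_zero, mul_eq_zero] at hdet
  exact (hdet.resolve_left (pow_ne_zero _ (neg_ne_zero.2 one_ne_zero))).resolve_right hD

theorem trace_eq_zero_of_anticommute (h2 : (2 : D) ≠ 0) {Dm Y : Matrix ι ι D}
    (hY : Dm * Y = -(Y * Dm)) (hD : det Dm ≠ 0) : trace Y = 0 := by
  have key : det Dm * trace Y = -(det Dm * trace Y) := by
    calc det Dm * trace Y = trace (Y * (Dm * adjugate Dm)) := by
          rw [mul_adjugate, mul_smul_comm, mul_one, trace_smul, smul_eq_mul]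
      _ = trace (-(Dm * Y) * adjugate Dm) := by rw [hY, neg_neg, mul_assoc]
      _ = -trace (Y * (adjugate Dm * Dm)) := by
          rw [neg_mul, trace_neg, mul_assoc, trace_mul_comm, mul_assoc]
      _ = -(det Dm * trace Y) := by
          rw [adjugate_mul, mul_smul_comm, mul_one, trace_smul, smul_eq_mul]
  have : (2 : D) * det Dm * trace Y = 0 := by linear_combination key
  simpa [h2, hD] using this

theorem det_sub_ne_zero_of_smul_one_eq_add_add [Nonempty ι] {E F G : Matrix ι ι D}
    (hE : IsIdempotentElem E) (hF : IsIdempotentElem F) (hG : IsIdempotentElem G) {c : D}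
    (hc : c • 1 = E + F + G) (hc' : c * (c - 1) * (c - 2) * (c - 3) ≠ 0) : det (F - G) ≠ 0 := by
  have factor : (F - G) * (F - G) = -((c • 1 - E) * ((c - 2) • 1 - E)) := by
    have hY : 1 - F - G = E - (c - 1) • 1 := by rw [sub_smul, one_smul, hc]; abel
    rw [hF.sub_mul_sub hG, hY]
    simp only [sub_mul, mul_sub, smul_mul_assoc, mul_smul_comm, one_mul, mul_one, hE.eq]
    module
  have ne_zero_or_one {t : D} (ht0 : t ≠ 0) (ht1 : t ≠ 1) : det (t • 1 - E) ≠ 0 :=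
    fun h => (hE.eq_zero_or_eq_one_of_det_smul_one_sub_eq_zero h).elim ht0 ht1
  have hdet := congrArg det factor
  rw [det_mul, det_neg, det_mul] at hdet
  intro h0
  rw [h0, zero_mul, eq_comm, mul_eq_zero, mul_eq_zero] at hdet
  refine hdet.elim (pow_ne_zero _ (neg_ne_zero.2 one_ne_zero)) (Or.elim · ?_ ?_)
  · exact ne_zero_or_one (fun h => hc' (by rw [h]; ring)) (fun h => hc' (by rw [h]; ring))
  · refine ne_zero_or_one (fun h => hc' ?_) (fun h => hc' ?_)
    · rw [sub_eq_zero.1 h]; ring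
    · rw [show c = 3 by linear_combination h]; ring

theorem IsSumOfThreeIdempotents.smul_one_constraint [Nonempty ι] (h2 : (2 : D) ≠ 0) {c : D}
    (hc : IsSumOfThreeIdempotents (c • (1 : Matrix ι ι D))) :
    c * (c - 1) * (c - 2) * (c - 3) * (2 * c - 3) = 0 := by
  obtain ⟨E, F, G, hE, hF, hG, hsum⟩ := hc
  by_contra hne
  have hD : det (F - G) ≠ 0 :=
    det_sub_ne_zero_of_smul_one_eq_add_add hE hF hG hsum fun h => hne (by rw [h, zero_mul])
  have hY : 1 - F - G = E - (c - 1) • 1 := by rw [sub_smul, one_smul, hsum]; abel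
  have anticomm : (F - G) * (E - (c - 1) • 1) = -((E - (c - 1) • 1) * (F - G)) := by
    rw [← hY]; exact hF.sub_mul_one_sub_sub hG
  obtain ⟨t, ht, hdet⟩ : ∃ t : D, (t = 0 ∨ t = 1) ∧ det (t • 1 - E) = 0 := by
    rcases hE.det_neg_eq_zero_or_det_one_sub_eq_zero with h | h
    · exact ⟨0, Or.inl rfl, by rwa [zero_smul, zero_sub]⟩
    · exact ⟨1, Or.inr rfl, by rwa [one_smul]⟩
  have hdet' : det ((t - (c - 1)) • 1 - (E - (c - 1) • 1)) = 0 := by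
    rwa [sub_smul, sub_sub_sub_cancel_right]
  -- `t - (c - 1)` is a root of `det (s • 1 - Y)`, hence so is `c - 1 - t`
  have hmirror := det_neg_smul_one_sub_eq_zero_of_anticommute anticomm hD hdet'
  rw [sub_sub_eq_add_sub, ← add_smul,
    show -(t - (c - 1)) + (c - 1) = 2 * c - 2 - t by ring] at hmirror
  apply hne
  rcases ht with rfl | rfl <;>
    rcases hE.eq_zero_or_eq_one_of_det_smul_one_sub_eq_zero hmirror with h | h
  · have : c - 1 = 0 := (mul_eq_zero.1 (by linear_combination h)).resolve_left h2
    rw [this]; ring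
  · linear_combination (c * (c - 1) * (c - 2) * (c - 3)) * h
  · linear_combination (c * (c - 1) * (c - 2) * (c - 3)) * h
  · have : c - 2 = 0 := (mul_eq_zero.1 (by linear_combination h)).resolve_left h2
    rw [this]; ring

end Domain

instance Nat.fact_prime_five : Fact (Nat.Prime 5) := ⟨Nat.prime_five⟩

namespace ZMod

theorem not_isSumOfThreeIdempotents_four (hι : Odd (Fintype.card ι)) :
    ¬ IsSumOfThreeIdempotents (4 : Matrix ι ι (ZMod 5)) := by
  rintro ⟨E, F, G, hE, hF, hG, hsum⟩
  have hY : 1 - F - G = E - 3 • 1 := by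
    rw [show 1 - F - G = 1 - (E + F + G) + E by abel, ← hsum,
      show (4 : Matrix ι ι (ZMod 5)) = 4 • 1 by rw [nsmul_one, Nat.cast_ofNat]]
    abel
  have hsq : (F - G) * (F - G) = (2 : ZMod 5) • 1 := by
    rw [hF.sub_mul_sub hG, hY, ofNat_smul_eq_nsmul (R := ZMod 5)]
    calc 1 - (E - 3 • 1) * (E - 3 • 1) = 2 • 1 + 5 • (E - 2 • 1) - (E * E - E) := by noncomm_ring
      _ = 2 • 1 := by rw [hE.eq, ZModModule.char_nsmul_eq_zero 5, sub_self, add_zero, sub_zero]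
  obtain ⟨m, hm⟩ := hι
  have hdet := congrArg det hsq
  rw [det_mul, det_smul, det_one, mul_one, hm] at hdet
  have non_square : ∀ x y : ZMod 5, y ≠ 0 → x * x ≠ y * y * 2 := by decide
  exact non_square _ (2 ^ m) (pow_ne_zero m (by decide)) (by rw [hdet]; ring)

theorem sub_mul_sub_eq_of_one_sub_sub_eq {P F G : Matrix ι ι (ZMod 5)}
    (hP : IsIdempotentElem P) (hF : IsIdempotentElem F) (hG : IsIdempotentElem G) {i : ι}
    (hY : 1 - F - G = P - 3 • 1 - 2 • single i i 1) :
    (F - G) * (F - G) =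
      (2 : ZMod 5) • (1 + (2 • single i i 1 + single i i 1 * P + P * single i i 1)) := by
  set Q : Matrix ι ι (ZMod 5) := single i i 1
  have hQ : Q * Q = Q := by rw [single_mul_single_same, mul_one]
  rw [hF.sub_mul_sub hG, hY, ofNat_smul_eq_nsmul (R := ZMod 5)]
  calc 1 - (P - 3 • 1 - 2 • Q) * (P - 3 • 1 - 2 • Q)
      = 2 • (1 + (2 • Q + Q * P + P * Q)) + 5 • (P - 2 • 1 - 4 • Q) - 4 • (Q * Q - Q)
        - (P * P - P) := by noncomm_ring
    _ = 2 • (1 + (2 • Q + Q * P + P * Q)) := by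
        rw [hP.eq, hQ, ZModModule.char_nsmul_eq_zero 5]; simp

theorem apply_eq_zero_of_det_sub_ne_zero {P F G : Matrix ι ι (ZMod 5)} (hP : IsIdempotentElem P)
    (hF : IsIdempotentElem F) (hG : IsIdempotentElem G) {i : ι}
    (hY : 1 - F - G = P - 3 • 1 - 2 • single i i 1) (hD : det (F - G) ≠ 0) : P i i = 0 := by
  have hsq := sub_mul_sub_eq_of_one_sub_sub_eq hP hF hG hY
  have anticomm : (F - G) * (1 - F - G) = -((1 - F - G) * (F - G)) := hF.sub_mul_one_sub_sub hG
  have anticomm' : (F - G) * ((1 - F - G) * ((F - G) * (F - G))) =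
      -((1 - F - G) * ((F - G) * (F - G)) * (F - G)) := by
    rw [← mul_assoc, anticomm, neg_mul, mul_assoc, mul_assoc, mul_assoc]
  have htr := trace_eq_zero_of_anticommute (by decide) anticomm hD
  have htr' := trace_eq_zero_of_anticommute (by decide) anticomm' hD
  set Q : Matrix ι ι (ZMod 5) := single i i 1
  have hQ : Q * Q = Q := by rw [single_mul_single_same, mul_one]
  have tQ : trace Q = 1 := trace_single_eq_same _ _
  have tQP : trace (Q * P) = P i i := by rw [trace_single_mul, one_smul]
  have tPQ : trace (P * Q) = P i i := by rw [trace_mul_comm, tQP]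
  have tQPQ : trace (Q * P * Q) = P i i := by rw [trace_mul_cycle, hQ, tQP]
  have tPQP : trace (P * Q * P) = P i i := by rw [trace_mul_cycle, hP.eq, tPQ]
  rw [hY] at htr
  rw [hsq, hY] at htr'
  simp only [trace_sub, trace_smul, trace_one, tQ] at htr
  simp only [sub_mul, mul_smul_comm, mul_add, smul_mul_assoc, mul_one, one_mul, ← mul_assoc,
    hP.eq, hQ, trace_sub, trace_add, trace_smul, trace_one, tQ, tQP, tPQ, tQPQ, tPQP] at htr'
  simp only [nsmul_eq_mul, Nat.cast_ofNat] at htr htr'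
  -- `trace (Y * (F - G) ^ 2) - 2 * trace Y = -2 (6 α + 10)` for `α = P i i`
  have h5 : (5 : ZMod 5) = 0 := by decide
  linear_combination 2 * htr' - 4 * htr + (5 * P i i + 8) * h5

theorem apply_eq_one_or_three_of_four_add_single_eq_add_add (hι : Even (Fintype.card ι))
    {P F G : Matrix ι ι (ZMod 5)} (hP : IsIdempotentElem P) (hF : IsIdempotentElem F)
    (hG : IsIdempotentElem G) {i : ι} (hsum : 4 + single i i 2 = P + F + G) :
    P i i = 1 ∨ P i i = 3 := by
  have hY : 1 - F - G = P - 3 • 1 - 2 • single i i 1 := by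
    rw [show 1 - F - G = 1 - (P + F + G) + P by abel, ← hsum,
      show (4 : Matrix ι ι (ZMod 5)) = 4 • 1 by rw [nsmul_one, Nat.cast_ofNat],
      show single i i (2 : ZMod 5) = 2 • single i i 1 by
        rw [smul_single, two_nsmul, one_add_one_eq_two]]
    abel
  have hdet : det (F - G) * det (F - G) = 2 ^ Fintype.card ι * (P i i ^ 2 + P i i + 3) := by
    rw [← det_mul, sub_mul_sub_eq_of_one_sub_sub_eq hP hF hG hY, det_smul,
      hP.det_one_add_single_mul_add_mul_single]
  by_cases hD : det (F - G) = 0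
  · rw [hD, zero_mul, eq_comm, mul_eq_zero] at hdet
    have roots : ∀ a : ZMod 5, a ^ 2 + a + 3 = 0 → a = 1 ∨ a = 3 := by decide
    exact roots _ (hdet.resolve_left (pow_ne_zero _ (by decide)))
  obtain ⟨m, hm⟩ := hι
  rw [apply_eq_zero_of_det_sub_ne_zero hP hF hG hY hD, hm] at hdet
  have non_square : ∀ x y : ZMod 5, y ≠ 0 → x * x ≠ y * y * 3 := by decide
  exact (non_square _ (2 ^ m) (pow_ne_zero m (by decide)) (by rw [hdet]; ring)).elim

theorem not_isSumOfThreeIdempotents_four_add_single (hι : Even (Fintype.card ι)) (i : ι) :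
    ¬ IsSumOfThreeIdempotents (4 + single i i 2 : Matrix ι ι (ZMod 5)) := by
  rintro ⟨E, F, G, hE, hF, hG, hsum⟩
  have hE' := apply_eq_one_or_three_of_four_add_single_eq_add_add hι hE hF hG hsum
  have hF' := apply_eq_one_or_three_of_four_add_single_eq_add_add hι hF hE hG
    (by rw [hsum]; abel)
  have hG' := apply_eq_one_or_three_of_four_add_single_eq_add_add hι hG hE hF
    (by rw [hsum]; abel)
  have hdiag := congrFun (congrFun hsum i) i
  simp only [Matrix.add_apply, single_apply_same, ofNat_apply, if_pos] at hdiag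
  have no_solution : ∀ a b c : ZMod 5, (a = 1 ∨ a = 3) → (b = 1 ∨ b = 3) → (c = 1 ∨ c = 3) →
      4 + 2 ≠ a + b + c := by decide
  exact no_solution _ _ _ hE' hF' hG' hdiag

theorem exists_not_isSumOfThreeIdempotents [Nonempty ι] :
    ∃ A : Matrix ι ι (ZMod 5), ¬ IsSumOfThreeIdempotents A := by
  obtain ⟨i⟩ := ‹Nonempty ι›
  rcases Nat.even_or_odd (Fintype.card ι) with hι | hι
  · exact ⟨_, not_isSumOfThreeIdempotents_four_add_single hι i⟩
  · exact ⟨_, not_isSumOfThreeIdempotents_four hι⟩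

end ZMod

theorem nonempty_ringEquiv_zmod_five {D : Type*} [CommRing D] [IsDomain D] (h5 : (5 : D) = 0)
    (hD : ∀ c : D, c * (c - 1) * (c - 2) * (c - 3) * (c - 4) = 0) : Nonempty (D ≃+* ZMod 5) := by
  have : CharP D 5 := (CharP.charP_iff_prime_eq_zero Nat.prime_five).2 (by exact_mod_cast h5)
  have hcast : Function.Surjective (ZMod.castHom dvd_rfl D : ZMod 5 →+* D) := by
    intro c
    have := hD c
    simp only [mul_eq_zero, sub_eq_zero] at this
    rcases this with (((h | h) | h) | h) | h <;> subst h
    exacts [⟨0, map_zero _⟩, ⟨1, map_one _⟩, ⟨2, map_ofNat _ 2⟩, ⟨3, map_ofNat _ 3⟩,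
      ⟨4, map_ofNat _ 4⟩]
  exact ⟨(RingEquiv.ofBijective _ ⟨(ZMod.castHom dvd_rfl D).injective, hcast⟩).symm⟩

theorem pow_three_eq_self_of_forall_isSumOfThreeIdempotents [Nonempty ι] {D : Type*} [CommRing D]
    [IsDomain D] (h : ∀ A : Matrix ι ι D, IsSumOfThreeIdempotents A) (c : D) : c ^ 3 = c := by
  obtain ⟨i⟩ := ‹Nonempty ι›
  by_cases h2 : (2 : D) = 0
  · obtain ⟨k, hk⟩ := (h (single i i c)).exists_trace_mul_self_eq
    rw [single_mul_single_same, trace_single_eq_same, trace_single_eq_same, h2, zero_mul,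
      add_zero] at hk
    rw [pow_succ, sq, hk, hk]
  have hscalar (x : D) := (h (x • 1)).smul_one_constraint h2
  by_cases h3 : (3 : D) = 0
  · have : 2 * c ^ 2 * (c ^ 3 - c) = 0 := by
      linear_combination hscalar c + c * (c - 1) * (5 * c ^ 2 - 9 * c + 6) * h3
    rcases mul_eq_zero.1 this with h0 | h0
    · rw [(pow_eq_zero_iff two_ne_zero).1 ((mul_eq_zero.1 h0).resolve_left h2)]; ring
    · exact sub_eq_zero.1 h0
  exfalso
  have h5 : (5 : D) = 0 := by
    have : (2 : D) * 2 * 2 * 3 * 5 = 0 := by linear_combination hscalar 4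
    simpa [h2, h3] using this
  obtain ⟨e⟩ := nonempty_ringEquiv_zmod_five h5 fun x => by
    have : (2 : D) * (x * (x - 1) * (x - 2) * (x - 3) * (x - 4)) = 0 := by
      linear_combination hscalar x - x * (x - 1) * (x - 2) * (x - 3) * h5
    simpa [h2] using this
  obtain ⟨A, hA⟩ := ZMod.exists_not_isSumOfThreeIdempotents (ι := ι)
  exact hA (e.mapMatrix.surjective.forall_isSumOfThreeIdempotents h A)

end

theorem isNilpotent_of_mem_jacobson_bot {R : Type*} [CommRing R] {x : R}
    (hx : x ∈ Ideal.jacobson (⊥ : Ideal R)) {y : R} (h : IsNilpotent (x * (x * y + 1))) :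
    IsNilpotent x := by
  obtain ⟨u, hu⟩ := (Ideal.mem_jacobson_bot.1 hx y).exists_right_inv
  rw [← mul_one x, ← hu, ← mul_assoc]
  exact (Commute.all _ _).isNilpotent_mul_right h

/-- If every matrix in `M_n(R)` over a commutative ring `R` (with `n ≥ 1`) is a sum of
three idempotents, then the Jacobson radical `J(R)` is nil and `R/J(R)` satisfies the
identity `x^3 = x`. -/
theorem jacobson_nil_and_quotient_cube_eq_self (R : Type*) [CommRing R] (n : ℕ)
    (hn : 1 ≤ n)
    (h : ∀ A : Matrix (Fin n) (Fin n) R,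
      ∃ E₁ E₂ E₃ : Matrix (Fin n) (Fin n) R,
        E₁ * E₁ = E₁ ∧ E₂ * E₂ = E₂ ∧ E₃ * E₃ = E₃ ∧ A = E₁ + E₂ + E₃) :
    (∀ x ∈ Ideal.jacobson (⊥ : Ideal R), IsNilpotent x) ∧
      (∀ x : R ⧸ Ideal.jacobson (⊥ : Ideal R), x ^ 3 = x) := by
  have : Nonempty (Fin n) := ⟨⟨0, hn⟩⟩
  have cube_sub_self : ∀ x : R, x ^ 3 - x ∈ nilradical R := fun x => by
    rw [nilradical_eq_sInf, Submodule.mem_sInf]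
    rintro p (hp : Ideal.IsPrime p)
    rw [← Ideal.Quotient.eq_zero_iff_mem, map_sub, map_pow, sub_eq_zero]
    exact pow_three_eq_self_of_forall_isSumOfThreeIdempotents
      ((RingHom.mapMatrix_surjective Ideal.Quotient.mk_surjective).forall_isSumOfThreeIdempotents
        h) _
  refine ⟨fun x hx => isNilpotent_of_mem_jacobson_bot hx (y := -x) ?_, fun x => ?_⟩
  · rw [show x * (x * -x + 1) = -(x ^ 3 - x) by ring]
    exact (mem_nilradical.1 (cube_sub_self x)).neg
  · obtain ⟨x, rfl⟩ := Ideal.Quotient.mk_surjective x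
    rw [← map_pow, Ideal.Quotient.eq]
    exact Ideal.radical_le_jacobson (cube_sub_self x)
end

section
/- Let R be a ring and n ≥ 1. Then every element of M_n(R) is a sum of three idempotents if and only if for every ideal I of R such that the factor ring R/I is indecomposable, every element of M_n(R/I) is a sum of three idempotents. -/
universe u

namespace SumThreeIdemAux

variable {R : Type*} [Ring R] {n : ℕ}

lemma mem_iff_mk (I : TwoSidedIdeal R) (x : R) :
    x ∈ I ↔ I.ringCon.mk' x = 0 := by
  rw [TwoSidedIdeal.mem_iff]
  exact ⟨fun h => (RingCon.eq _).mpr h, fun h => (RingCon.eq _).mp h⟩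

lemma cross_mul {S : Type*} [Ring S] (p q : S) (hq : ∀ a, q * a = a * q) (x v : S) :
    p * x * (q * v) = p * q * (x * v) := by
  calc p * x * (q * v) = p * (x * q) * v := by simp only [mul_assoc]
    _ = p * (q * x) * v := by rw [hq]
    _ = p * q * (x * v) := by simp only [mul_assoc]

lemma key_mul {S : Type*} [Ring S] (e : S) (he : e * e = e) (hc : ∀ a, e * a = a * e)
    (x y u v : S) :
    (e * x + (1 - e) * y) * (e * u + (1 - e) * v) = e * (x * u) + (1 - e) * (y * v) := by
  have hc' : ∀ a, (1 - e) * a = a * (1 - e) := fun a => by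
    rw [sub_mul, mul_sub, one_mul, mul_one, hc]
  have h0 : e * (1 - e) = 0 := by rw [mul_sub, mul_one, he, sub_self]
  have h0' : (1 - e) * e = 0 := by rw [sub_mul, one_mul, he, sub_self]
  have he' : (1 - e) * (1 - e) = 1 - e := by
    rw [mul_sub, mul_one, h0', sub_zero]
  rw [add_mul, mul_add, mul_add,
    cross_mul e e hc x u, cross_mul e (1 - e) hc' x v,
    cross_mul (1 - e) e hc y u, cross_mul (1 - e) (1 - e) hc' y v,
    he, he', h0, h0', zero_mul, zero_mul, add_zero, zero_add]

/-- `A` is a sum of three idempotents modulo the two-sided ideal `I`. -/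
def P (n : ℕ) (I : TwoSidedIdeal R) (A : Matrix (Fin n) (Fin n) R) : Prop :=
  ∃ E₁ E₂ E₃ : Matrix (Fin n) (Fin n) R,
    (∀ i j, (E₁ * E₁ - E₁) i j ∈ I) ∧ (∀ i j, (E₂ * E₂ - E₂) i j ∈ I) ∧
    (∀ i j, (E₃ * E₃ - E₃) i j ∈ I) ∧ (∀ i j, (A - (E₁ + E₂ + E₃)) i j ∈ I)

lemma map_mul_apply {S : Type*} [Ring S] (f : R →+* S) (N M : Matrix (Fin n) (Fin n) R) (i j) :
    f ((N * M) i j) = (N.map f * M.map f) i j := by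
  rw [Matrix.mul_apply, Matrix.mul_apply, map_sum]
  exact Finset.sum_congr rfl fun k _ => by rw [map_mul, Matrix.map_apply, Matrix.map_apply]

lemma lift_P (I : TwoSidedIdeal R) {S : Type*} [Ring S] (f : R →+* S)
    (hker : ∀ x, x ∈ I ↔ f x = 0) (hsurj : Function.Surjective f)
    (A : Matrix (Fin n) (Fin n) R) (B₁ B₂ B₃ : Matrix (Fin n) (Fin n) S)
    (h1 : B₁ * B₁ = B₁) (h2 : B₂ * B₂ = B₂) (h3 : B₃ * B₃ = B₃)
    (hsum : ∀ i j, f (A i j) = (B₁ + B₂ + B₃) i j) : P n I A := by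
  have lift : ∀ M : Matrix (Fin n) (Fin n) S, ∃ N : Matrix (Fin n) (Fin n) R, N.map f = M :=
    fun M => ⟨fun i j => (hsurj (M i j)).choose,
      by ext i j; exact (hsurj (M i j)).choose_spec⟩
  obtain ⟨N₁, hN₁⟩ := lift B₁
  obtain ⟨N₂, hN₂⟩ := lift B₂
  obtain ⟨N₃, hN₃⟩ := lift B₃
  have idem : ∀ (N : Matrix (Fin n) (Fin n) R) (M : Matrix (Fin n) (Fin n) S),
      N.map f = M → M * M = M → ∀ i j, (N * N - N) i j ∈ I := by
    intro N M hNM hM i j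
    rw [hker, Matrix.sub_apply, map_sub, map_mul_apply, hNM, hM, ← hNM,
      Matrix.map_apply, sub_self]
  refine ⟨N₁, N₂, N₃, idem _ _ hN₁ h1, idem _ _ hN₂ h2, idem _ _ hN₃ h3, fun i j => ?_⟩
  rw [hker, Matrix.sub_apply, map_sub, hsum i j]
  simp only [Matrix.add_apply, map_add, ← hN₁, ← hN₂, ← hN₃, Matrix.map_apply, sub_self]

lemma combine_idem {S : Type*} [Ring S] (f : R →+* S) (e : S) (he : e * e = e)
    (hc : ∀ a, e * a = a * e) (F G : Matrix (Fin n) (Fin n) R)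
    (hF : ∀ i j, e * f ((F * F - F) i j) = 0)
    (hG : ∀ i j, (1 - e) * f ((G * G - G) i j) = 0) :
    (Matrix.of fun a b => e * f (F a b) + (1 - e) * f (G a b)) *
      (Matrix.of fun a b => e * f (F a b) + (1 - e) * f (G a b)) =
      (Matrix.of fun a b => e * f (F a b) + (1 - e) * f (G a b)) := by
  ext a b
  have eF : e * f ((F * F) a b) = e * f (F a b) := by
    have h := hF a b
    rw [Matrix.sub_apply, map_sub, mul_sub, sub_eq_zero] at h
    exact h
  have eG : (1 - e) * f ((G * G) a b) = (1 - e) * f (G a b) := by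
    have h := hG a b
    rw [Matrix.sub_apply, map_sub, mul_sub, sub_eq_zero] at h
    exact h
  rw [Matrix.mul_apply]
  calc ∑ k, (Matrix.of fun a b => e * f (F a b) + (1 - e) * f (G a b)) a k *
        (Matrix.of fun a b => e * f (F a b) + (1 - e) * f (G a b)) k b
      = ∑ k, (e * (f (F a k) * f (F k b)) + (1 - e) * (f (G a k) * f (G k b))) :=
        Finset.sum_congr rfl fun k _ => by
          simp only [Matrix.of_apply]
          exact key_mul e he hc _ _ _ _
    _ = e * f ((F * F) a b) + (1 - e) * f ((G * G) a b) := by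
        rw [Finset.sum_add_distrib, ← Finset.mul_sum, ← Finset.mul_sum,
          Matrix.mul_apply, Matrix.mul_apply, map_sum, map_sum]
        simp only [map_mul]
    _ = (Matrix.of fun a b => e * f (F a b) + (1 - e) * f (G a b)) a b := by
        rw [eF, eG, Matrix.of_apply]

/-- The two-sided ideal of elements annihilated (after applying `f`) by a central element. -/
def annIdeal {S : Type*} [Ring S] (f : R →+* S) (u : S) (hcomm : ∀ a, u * a = a * u) :
    TwoSidedIdeal R :=
  TwoSidedIdeal.mk' {x | u * f x = 0}
    (by simp)
    (fun {x y} hx hy => by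
      simp only [Set.mem_setOf_eq, map_add, mul_add] at *
      rw [hx, hy, add_zero])
    (fun {x} hx => by
      simp only [Set.mem_setOf_eq, map_neg, mul_neg] at *
      rw [hx, neg_zero])
    (fun {x y} hy => by
      simp only [Set.mem_setOf_eq, map_mul] at *
      rw [← mul_assoc, hcomm (f x), mul_assoc, hy, mul_zero])
    (fun {x y} hx => by
      simp only [Set.mem_setOf_eq, map_mul] at *
      rw [← mul_assoc, hx, zero_mul])

lemma mem_annIdeal {S : Type*} [Ring S] (f : R →+* S) (u : S) (hcomm : ∀ a, u * a = a * u)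
    (x : R) : x ∈ annIdeal f u hcomm ↔ u * f x = 0 :=
  TwoSidedIdeal.mem_mk' _ _ _ _ _ _ _

end SumThreeIdemAux

open SumThreeIdemAux

/-- For a ring `R` and `n ≥ 1`, every element of `M_n(R)` is a sum of three idempotents
if and only if, for every indecomposable factor ring of `R` (i.e. every surjective ring
homomorphism image whose only central idempotents are `0` and `1`), every element of the
corresponding matrix ring is a sum of three idempotents. -/
theorem matrix_sum_three_idempotents_iff_indecomposable_factors (R : Type u)
    [Ring R] (n : ℕ) (hn : 1 ≤ n) :
    (∀ A : Matrix (Fin n) (Fin n) R,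
      ∃ E₁ E₂ E₃ : Matrix (Fin n) (Fin n) R,
        E₁ * E₁ = E₁ ∧ E₂ * E₂ = E₂ ∧ E₃ * E₃ = E₃ ∧ A = E₁ + E₂ + E₃) ↔
    (∀ (S : Type u) [Ring S] (f : R →+* S), Function.Surjective f →
      (∀ e : S, e * e = e → (∀ x : S, e * x = x * e) → e = 0 ∨ e = 1) →
      ∀ A : Matrix (Fin n) (Fin n) S,
        ∃ E₁ E₂ E₃ : Matrix (Fin n) (Fin n) S,
          E₁ * E₁ = E₁ ∧ E₂ * E₂ = E₂ ∧ E₃ * E₃ = E₃ ∧ A = E₁ + E₂ + E₃) := by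
  constructor
  · -- forward: push a decomposition of a lift forward along `f`
    intro h S _ f hf _ A
    obtain ⟨E₁, E₂, E₃, e1, e2, e3, hsum⟩ := h (Matrix.of fun i j => (hf (A i j)).choose)
    refine ⟨E₁.map f, E₂.map f, E₃.map f, ?_, ?_, ?_, ?_⟩
    · ext i j; rw [← map_mul_apply f E₁ E₁ i j, e1]; rfl
    · ext i j; rw [← map_mul_apply f E₂ E₂ i j, e2]; rfl
    · ext i j; rw [← map_mul_apply f E₃ E₃ i j, e3]; rfl
    · ext i j
      have hch : f ((Matrix.of fun i j => (hf (A i j)).choose) i j) = A i j :=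
        (hf (A i j)).choose_spec
      rw [← hch, hsum]
      simp only [Matrix.add_apply, map_add, Matrix.map_apply]
  · -- backward: Zorn's lemma argument
    intro h A
    by_contra hA
    classical
    set 𝒮 : Set (TwoSidedIdeal R) := {I | ¬ P n I A} with h𝒮
    have hbot : (⊥ : TwoSidedIdeal R) ∈ 𝒮 := by
      rintro ⟨E₁, E₂, E₃, e1, e2, e3, es⟩
      have z2e : ∀ M N : Matrix (Fin n) (Fin n) R,
          (∀ i j, (M - N) i j ∈ (⊥ : TwoSidedIdeal R)) → M = N := by
        intro M N hMN
        ext i j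
        have := (TwoSidedIdeal.mem_bot R).mp (hMN i j)
        rw [Matrix.sub_apply, sub_eq_zero] at this
        exact this
      exact hA ⟨E₁, E₂, E₃, z2e _ _ e1, z2e _ _ e2, z2e _ _ e3, z2e _ _ es⟩
    have hchainUB : ∀ c ⊆ 𝒮, IsChain (· ≤ ·) c → ∀ y ∈ c, ∃ ub ∈ 𝒮, ∀ z ∈ c, z ≤ ub := by
      intro c hc hchain y hy
      refine ⟨TwoSidedIdeal.mk' (⋃ J ∈ c, (J : Set R))
        (Set.mem_biUnion hy y.zero_mem)
        (fun {a b} ha hb => ?_) (fun {a} ha => ?_)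
        (fun {a b} hb => ?_) (fun {a b} ha => ?_), ?_, fun z hz => ?_⟩
      · obtain ⟨J₁, hJ₁, haJ⟩ := Set.mem_iUnion₂.mp ha
        obtain ⟨J₂, hJ₂, hbJ⟩ := Set.mem_iUnion₂.mp hb
        rcases hchain.total hJ₁ hJ₂ with hle | hle
        · exact Set.mem_biUnion hJ₂ (J₂.add_mem (hle haJ) hbJ)
        · exact Set.mem_biUnion hJ₁ (J₁.add_mem haJ (hle hbJ))
      · obtain ⟨J, hJ, haJ⟩ := Set.mem_iUnion₂.mp ha
        exact Set.mem_biUnion hJ (J.neg_mem haJ)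
      · obtain ⟨J, hJ, hbJ⟩ := Set.mem_iUnion₂.mp hb
        exact Set.mem_biUnion hJ (J.mul_mem_left a b hbJ)
      · obtain ⟨J, hJ, haJ⟩ := Set.mem_iUnion₂.mp ha
        exact Set.mem_biUnion hJ (J.mul_mem_right a b haJ)
      · -- the union is in 𝒮
        rintro ⟨E₁, E₂, E₃, e1, e2, e3, es⟩
        set D : Fin 4 → Matrix (Fin n) (Fin n) R :=
          ![E₁ * E₁ - E₁, E₂ * E₂ - E₂, E₃ * E₃ - E₃, A - (E₁ + E₂ + E₃)] with hD
        have hall : ∀ (k : Fin 4) i j, ∃ J ∈ c, D k i j ∈ J := by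
          intro k i j
          have hU : D k i j ∈ (⋃ J ∈ c, (J : Set R)) := by
            fin_cases k
            · exact (TwoSidedIdeal.mem_mk' _ _ _ _ _ _ _).mp (e1 i j)
            · exact (TwoSidedIdeal.mem_mk' _ _ _ _ _ _ _).mp (e2 i j)
            · exact (TwoSidedIdeal.mem_mk' _ _ _ _ _ _ _).mp (e3 i j)
            · exact (TwoSidedIdeal.mem_mk' _ _ _ _ _ _ _).mp (es i j)
          simpa using hU
        choose g hgc hgm using hall
        haveI : Nonempty {J // J ∈ c} := ⟨⟨y, hy⟩⟩
        have hdir : Directed (· ≤ ·) (fun J : {J // J ∈ c} => (J : TwoSidedIdeal R)) :=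
          directedOn_iff_directed.mp hchain.directedOn
        obtain ⟨z, hz⟩ := hdir.finset_le
          (Finset.univ.image (fun t : Fin 4 × Fin n × Fin n =>
            (⟨g t.1 t.2.1 t.2.2, hgc t.1 t.2.1 t.2.2⟩ : {J // J ∈ c})))
        have hmemz : ∀ (k : Fin 4) i j, D k i j ∈ (z : TwoSidedIdeal R) := by
          intro k i j
          exact hz ⟨g k i j, hgc k i j⟩
            (Finset.mem_image.mpr ⟨(k, i, j), Finset.mem_univ _, rfl⟩) (hgm k i j)
        exact hc z.2 ⟨E₁, E₂, E₃, fun i j => hmemz 0 i j, fun i j => hmemz 1 i j,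
          fun i j => hmemz 2 i j, fun i j => hmemz 3 i j⟩
      · -- upper bound
        rw [TwoSidedIdeal.le_iff, TwoSidedIdeal.coe_mk']
        exact fun x hx => Set.mem_biUnion hz hx
    obtain ⟨I, -, hImax⟩ := zorn_le_nonempty₀ 𝒮 hchainUB ⊥ hbot
    have hImem : ¬ P n I A := hImax.1
    set π : R →+* I.ringCon.Quotient := I.ringCon.mk' with hπ
    have hker : ∀ x, x ∈ I ↔ π x = 0 := mem_iff_mk I
    have hsurjπ : Function.Surjective π := fun q => Quotient.inductionOn' q fun a => ⟨a, rfl⟩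
    have hPgt : ∀ K : TwoSidedIdeal R, I < K → P n K A := by
      intro K hK
      by_contra hP
      exact hK.ne (le_antisymm hK.le (hImax.2 hP hK.le))
    have hcent : ∀ e : I.ringCon.Quotient, e * e = e →
        (∀ x, e * x = x * e) → e = 0 ∨ e = 1 := by
      intro e he hecomm
      by_contra hcon
      push_neg at hcon
      obtain ⟨he0, he1⟩ := hcon
      have hecomm' : ∀ a, (1 - e) * a = a * (1 - e) := fun a => by
        rw [sub_mul, mul_sub, one_mul, mul_one, hecomm]
      have h0 : e * (1 - e) = 0 := by rw [mul_sub, mul_one, he, sub_self]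
      have h0' : (1 - e) * e = 0 := by rw [sub_mul, one_mul, he, sub_self]
      set K₁ : TwoSidedIdeal R := annIdeal π e hecomm with hK₁
      set K₂ : TwoSidedIdeal R := annIdeal π (1 - e) hecomm' with hK₂
      have hIK₁ : I < K₁ := by
        obtain ⟨w, hw⟩ := hsurjπ (1 - e)
        refine lt_of_le_of_ne (fun x hx => ?_) (fun hEq => ?_)
        · rw [hK₁, mem_annIdeal, (hker x).mp hx, mul_zero]
        · have hwK : w ∈ K₁ := by rw [hK₁, mem_annIdeal, hw, h0]
          rw [← hEq, hker, hw] at hwK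
          exact he1 (by rwa [sub_eq_zero, eq_comm] at hwK)
      have hIK₂ : I < K₂ := by
        obtain ⟨w, hw⟩ := hsurjπ e
        refine lt_of_le_of_ne (fun x hx => ?_) (fun hEq => ?_)
        · rw [hK₂, mem_annIdeal, (hker x).mp hx, mul_zero]
        · have hwK : w ∈ K₂ := by rw [hK₂, mem_annIdeal, hw, h0']
          rw [← hEq, hker, hw] at hwK
          exact he0 hwK
      obtain ⟨F₁, F₂, F₃, f1, f2, f3, fs⟩ := hPgt K₁ hIK₁
      obtain ⟨G₁, G₂, G₃, g1, g2, g3, gs⟩ := hPgt K₂ hIK₂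
      simp only [hK₁, hK₂, mem_annIdeal] at f1 f2 f3 fs g1 g2 g3 gs
      refine hImem (lift_P I π hker hsurjπ A
        (Matrix.of fun a b => e * π (F₁ a b) + (1 - e) * π (G₁ a b))
        (Matrix.of fun a b => e * π (F₂ a b) + (1 - e) * π (G₂ a b))
        (Matrix.of fun a b => e * π (F₃ a b) + (1 - e) * π (G₃ a b))
        (combine_idem π e he hecomm F₁ G₁ f1 g1)
        (combine_idem π e he hecomm F₂ G₂ f2 g2)
        (combine_idem π e he hecomm F₃ G₃ f3 g3) (fun i j => ?_))
      have hF' : e * π ((F₁ + F₂ + F₃) i j) = e * π (A i j) := by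
        have hh := fs i j
        rw [Matrix.sub_apply, map_sub, mul_sub, sub_eq_zero] at hh
        exact hh.symm
      have hG' : (1 - e) * π ((G₁ + G₂ + G₃) i j) = (1 - e) * π (A i j) := by
        have hh := gs i j
        rw [Matrix.sub_apply, map_sub, mul_sub, sub_eq_zero] at hh
        exact hh.symm
      calc π (A i j) = e * π (A i j) + (1 - e) * π (A i j) := by
            rw [← add_mul, add_sub_cancel, one_mul]
        _ = e * π ((F₁ + F₂ + F₃) i j) + (1 - e) * π ((G₁ + G₂ + G₃) i j) := by
            rw [hF', hG']
        _ = _ := by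
            simp only [Matrix.add_apply, Matrix.of_apply, map_add, mul_add]
            abel
    obtain ⟨B₁, B₂, B₃, b1, b2, b3, bs⟩ := h I.ringCon.Quotient π hsurjπ hcent (π.mapMatrix A)
    exact hImem (lift_P I π hker hsurjπ A B₁ B₂ B₃ b1 b2 b3
      (fun i j => by rw [← bs]; rfl))
end

section
/- Let R be a ring. Then every element of R is a sum of three commuting idempotents (a = e + f + g with e, f, g pairwise commuting idempotents) if and only if R is commutative and every element of R is a sum of three idempotents. -/
private lemma three_idem_pows {R : Type*} [Ring R] (e f g : R)
    (he : e*e=e) (hf : f*f=f) (hg : g*g=g)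
    (hef : e*f=f*e) (heg : e*g=g*e) (hfg : f*g=g*f) :
    ((e+f+g)*(e+f+g) = (e+f+g) + 2•(e*f+e*g+f*g))
    ∧ ((e+f+g)*(e+f+g)*(e+f+g) = (e+f+g) + 6•(e*f+e*g+f*g) + 6•(e*(f*g)))
    ∧ ((e+f+g)*(e+f+g)*(e+f+g)*(e+f+g) = (e+f+g) + 14•(e*f+e*g+f*g) + 36•(e*(f*g)))
    ∧ ((e*(f*g))*(e*(f*g)) = e*(f*g)) := by
  have he' : ∀ x : R, e*(e*x) = e*x := fun x => by rw [← mul_assoc, he]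
  have hf' : ∀ x : R, f*(f*x) = f*x := fun x => by rw [← mul_assoc, hf]
  have hg' : ∀ x : R, g*(g*x) = g*x := fun x => by rw [← mul_assoc, hg]
  have hfe : f*e = e*f := hef.symm
  have hge : g*e = e*g := heg.symm
  have hgf : g*f = f*g := hfg.symm
  have hfe' : ∀ x : R, f*(e*x) = e*(f*x) := fun x => by rw [← mul_assoc, hfe, mul_assoc]
  have hge' : ∀ x : R, g*(e*x) = e*(g*x) := fun x => by rw [← mul_assoc, hge, mul_assoc]
  have hgf' : ∀ x : R, g*(f*x) = f*(g*x) := fun x => by rw [← mul_assoc, hgf, mul_assoc]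
  refine ⟨?_, ?_, ?_, ?_⟩ <;>
  · simp only [mul_add, add_mul, mul_assoc, he, hf, hg, hfe, hge, hgf, he', hf', hg',
      hfe', hge', hgf']
    try abel

/-- Every element of a ring `R` is a sum of three commuting idempotents if and only if
`R` is commutative and every element of `R` is a sum of three idempotents. -/
theorem sum_three_commuting_idempotents_iff (R : Type*) [Ring R] :
    (∀ a : R, ∃ e f g : R, e * e = e ∧ f * f = f ∧ g * g = g ∧
      e * f = f * e ∧ e * g = g * e ∧ f * g = g * f ∧ a = e + f + g) ↔
    ((∀ x y : R, x * y = y * x) ∧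
      ∀ a : R, ∃ e f g : R, e * e = e ∧ f * f = f ∧ g * g = g ∧ a = e + f + g) := by
  constructor
  · intro H
    -- Step 1: the quartic identity
    have quart : ∀ a : R, a*a*a*a + 11•(a*a) = 6•(a*a*a) + 6•a := by
      intro a
      obtain ⟨e,f,g,he,hf,hg,hef,heg,hfg,rfl⟩ := H a
      obtain ⟨h2, h3, h4, -⟩ := three_idem_pows e f g he hf hg hef heg hfg
      rw [h4, h3, h2]; abel
    -- Step 2: 24 = 0
    have h24 : (24:R) = 0 := by
      have h := quart (-1)
      norm_num at h
      have h2 := sub_eq_zero_of_eq h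
      norm_num at h2
      exact h2
    -- Step 3: 12 = 0, using a decomposition of 5
    have h12 : (12:R) = 0 := by
      obtain ⟨e,f,g,he,hf,hg,hef,heg,hfg,h5⟩ := H (5:R)
      obtain ⟨h2, h3, -, hqq⟩ := three_idem_pows e f g he hf hg hef heg hfg
      rw [← h5] at h2 h3
      have hp : (2:ℕ)•(e*f+e*g+f*g) = (20:R) := by
        calc (2:ℕ)•(e*f+e*g+f*g) = ((5:R) + 2•(e*f+e*g+f*g)) - 5 := by abel
        _ = (5:R)*5 - 5 := by rw [← h2]
        _ = 20 := by norm_num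
      have hp6 : (6:ℕ)•(e*f+e*g+f*g) = (60:R) := by
        calc (6:ℕ)•(e*f+e*g+f*g) = (3:ℕ)•((2:ℕ)•(e*f+e*g+f*g)) := by
              rw [smul_smul]; norm_num
        _ = (3:ℕ)•(20:R) := by rw [hp]
        _ = 60 := by norm_num
      have hq6 : (6:ℕ)•(e*(f*g)) = (12:R) := by
        calc (6:ℕ)•(e*(f*g))
            = ((5:R) + 6•(e*f+e*g+f*g) + 6•(e*(f*g))) - 5 - 6•(e*f+e*g+f*g) := by abel
        _ = (5:R)*5*5 - 5 - 60 := by rw [← h3, hp6]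
        _ = 60 := by norm_num
        _ = 12 + 2*24 := by norm_num
        _ = 12 := by rw [h24]; norm_num
      have h12q : (12:ℕ)•(e*(f*g)) = 0 := by
        calc (12:ℕ)•(e*(f*g)) = (2:ℕ)•((6:ℕ)•(e*(f*g))) := by
              rw [smul_smul]; norm_num
        _ = (2:ℕ)•(12:R) := by rw [hq6]
        _ = (24:R) := by norm_num
        _ = 0 := h24
      calc (12:R) = (6:ℕ)•(e*(f*g)) := hq6.symm
      _ = (6:ℕ)•((e*(f*g))*(e*(f*g))) := by rw [hqq]
      _ = ((6:ℕ)•(e*(f*g)))*(e*(f*g)) := by rw [smul_mul_assoc]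
      _ = (12:R)*(e*(f*g)) := by rw [hq6]
      _ = (12:ℕ)•(e*(f*g)) := by rw [nsmul_eq_mul]; norm_num
      _ = 0 := h12q
    have h12a : ∀ x : R, (12:ℕ)•x = 0 := by
      intro x
      rw [nsmul_eq_mul, Nat.cast_ofNat, h12, zero_mul]
    have h24a : ∀ x : R, (24:ℕ)•x = 0 := by
      intro x
      rw [show (24:ℕ) = 2*12 from rfl, mul_smul, h12a, smul_zero]
    have h48a : ∀ x : R, (48:ℕ)•x = 0 := by
      intro x
      rw [show (48:ℕ) = 4*12 from rfl, mul_smul, h12a, smul_zero]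
    -- Step 4: 4a⁴ = 4a²
    have hN : ∀ a : R, (4:ℕ)•(a*a*a*a) = (4:ℕ)•(a*a) := by
      intro a
      have h := congrArg (fun x : R => (4:ℕ)•x) (quart a)
      simp only [smul_add, smul_smul, Nat.reduceMul] at h
      -- h : 4•a⁴ + 44•a² = 24•a³ + 24•a
      calc (4:ℕ)•(a*a*a*a)
          = ((4:ℕ)•(a*a*a*a) + (44:ℕ)•(a*a)) + (4:ℕ)•(a*a) - (48:ℕ)•(a*a) := by
            abel
      _ = ((24:ℕ)•(a*a*a) + (24:ℕ)•a) + (4:ℕ)•(a*a) - (48:ℕ)•(a*a) := by rw [h]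
      _ = (4:ℕ)•(a*a) := by rw [h24a, h24a, h48a]; abel
    -- Step 5: square-zero elements
    have hsq : ∀ t : R, t*t = 0 → (2:ℕ)•t = 0 ∧ ∃ w : R, t = (2:ℕ)•w := by
      intro t ht
      constructor
      · have h6 : (6:ℕ)•t = 0 := by
          have h := quart t
          simp only [ht, zero_mul, smul_zero, add_zero, zero_add] at h
          exact h.symm
        have h8 : (8:ℕ)•t = 0 := by
          have h := hN (1+t)
          have e2 : (1+t)*(1+t) = 1 + (2:ℕ)•t := by
            simp only [mul_add, add_mul, one_mul, mul_one, ht, add_zero]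
            abel
          have e4 : (1+t)*(1+t)*(1+t)*(1+t) = 1 + (4:ℕ)•t := by
            rw [mul_assoc ((1+t)*(1+t)), e2, two_smul]
            simp only [mul_add, add_mul, one_mul, mul_one, ht, add_zero]
            abel
          rw [e4, e2] at h
          simp only [smul_add, smul_smul, Nat.reduceMul] at h
          -- h : 4•1 + 16•t = 4•1 + 8•t
          have h' : (16:ℕ)•t = (8:ℕ)•t := add_left_cancel h
          calc (8:ℕ)•t = (16:ℕ)•t - (8:ℕ)•t := by abel
          _ = 0 := by rw [h', sub_self]
        calc (2:ℕ)•t = (8:ℕ)•t - (6:ℕ)•t := by abel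
        _ = 0 := by rw [h8, h6, sub_zero]
      · obtain ⟨e,f,g,he,hf,hg,hef,heg,hfg,hsum⟩ := H t
        obtain ⟨h2, -, -, -⟩ := three_idem_pows e f g he hf hg hef heg hfg
        rw [← hsum] at h2
        rw [ht] at h2
        refine ⟨-(e*f+e*g+f*g), ?_⟩
        rw [smul_neg]
        calc t = (t + (2:ℕ)•(e*f+e*g+f*g)) - (2:ℕ)•(e*f+e*g+f*g) := by abel
        _ = 0 - (2:ℕ)•(e*f+e*g+f*g) := by rw [← h2]
        _ = -((2:ℕ)•(e*f+e*g+f*g)) := by abel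
    -- Step 6: idempotents are central
    have hcent : ∀ e : R, e*e = e → ∀ y : R, e*y = y*e := by
      intro e he y
      have he' : ∀ x : R, e*(e*x) = e*x := fun x => by rw [← mul_assoc, he]
      have hTsq : ∀ z : R, (e*z - e*(z*e))*(e*z - e*(z*e)) = 0 := by
        intro z
        simp only [mul_sub, sub_mul, mul_assoc, he, he']
        abel
      have hTsq' : ∀ z : R, (z*e - e*(z*e))*(z*e - e*(z*e)) = 0 := by
        intro z
        simp only [mul_sub, sub_mul, mul_assoc, he, he']
        abel
      -- elements with t² = 0, e t = t, t e = 0 vanish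
      have main : ∀ t : R, t*t = 0 → e*t = t → t*e = 0 → t = 0 := by
        intro t ht2 het hte
        obtain ⟨h2t, w, hw⟩ := hsq t ht2
        obtain ⟨-, k, hk⟩ := hsq _ (hTsq w)
        have h1 : t = (2:ℕ)•(e*w - e*(w*e)) := by
          calc t = e*t - e*(t*e) := by rw [het, hte, mul_zero, sub_zero]
          _ = e*((2:ℕ)•w) - e*(((2:ℕ)•w)*e) := by rw [← hw]
          _ = (2:ℕ)•(e*w - e*(w*e)) := by
              rw [smul_mul_assoc, mul_smul_comm, mul_smul_comm, smul_sub]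
        have h4 : t = (4:ℕ)•k := by
          rw [h1, hk, smul_smul]; norm_num
        have h3t : (3:ℕ)•t = 0 := by
          have h34 : (3:ℕ)*4 = 12 := by norm_num
          rw [h4, smul_smul, h34]
          exact h12a k
        calc t = (3:ℕ)•t - (2:ℕ)•t := by abel
        _ = 0 := by rw [h3t, h2t, sub_zero]
      have main' : ∀ t : R, t*t = 0 → e*t = 0 → t*e = t → t = 0 := by
        intro t ht2 het hte
        obtain ⟨h2t, w, hw⟩ := hsq t ht2
        obtain ⟨-, k, hk⟩ := hsq _ (hTsq' w)
        have h1 : t = (2:ℕ)•(w*e - e*(w*e)) := by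
          calc t = t*e - e*(t*e) := by rw [hte, het]; abel
          _ = ((2:ℕ)•w)*e - e*(((2:ℕ)•w)*e) := by rw [← hw]
          _ = (2:ℕ)•(w*e - e*(w*e)) := by
              rw [smul_mul_assoc, mul_smul_comm, smul_sub]
        have h4 : t = (4:ℕ)•k := by
          rw [h1, hk, smul_smul]; norm_num
        have h3t : (3:ℕ)•t = 0 := by
          have h34 : (3:ℕ)*4 = 12 := by norm_num
          rw [h4, smul_smul, h34]
          exact h12a k
        calc t = (3:ℕ)•t - (2:ℕ)•t := by abel
        _ = 0 := by rw [h3t, h2t, sub_zero]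
      have hA : e*y - e*(y*e) = 0 := by
        refine main _ (hTsq y) ?_ ?_
        · simp only [mul_sub, he', ]
        · simp only [sub_mul, mul_assoc, he]
          abel
      have hB : y*e - e*(y*e) = 0 := by
        refine main' _ (hTsq' y) ?_ ?_
        · simp only [mul_sub, he', sub_self]
        · simp only [sub_mul, mul_assoc, he]
      have hye : e*y = e*(y*e) := by rw [sub_eq_zero] at hA; exact hA
      have hye' : y*e = e*(y*e) := by rw [sub_eq_zero] at hB; exact hB
      exact hye.trans hye'.symm
    -- conclude
    refine ⟨?_, ?_⟩
    · intro x y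
      obtain ⟨e,f,g,he,hf,hg,hef,heg,hfg,rfl⟩ := H x
      rw [add_mul, add_mul, mul_add, mul_add, hcent e he y, hcent f hf y, hcent g hg y]
    · intro a
      obtain ⟨e,f,g,he,hf,hg,-,-,-,hsum⟩ := H a
      exact ⟨e,f,g,he,hf,hg,hsum⟩
  · rintro ⟨hcomm, H⟩ a
    obtain ⟨e,f,g,he,hf,hg,hsum⟩ := H a
    exact ⟨e,f,g,he,hf,hg, hcomm e f, hcomm e g, hcomm f g, hsum⟩
end

section
/- Let R be a ring. Then every element of R is a sum of two involutions (a = u + v with u^2 = 1 and v^2 = 1) if and only if 3 = 0 in R and R satisfies the identity x^3 = x (equivalently, R is a subdirect product of copies of Z_3). -/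
/-- Every element of a ring `R` is a sum of two involutions if and only if `3 = 0` in `R`
and `R` satisfies the identity `x^3 = x` (i.e. `R` is a subdirect product of copies of
`ℤ/3`). -/
theorem sum_two_involutions_iff (R : Type*) [Ring R] :
    (∀ a : R, ∃ u v : R, u ^ 2 = 1 ∧ v ^ 2 = 1 ∧ a = u + v) ↔
    ((3 : R) = 0 ∧ ∀ x : R, x ^ 3 = x) := by
  constructor
  · intro h
    -- Step 1: 3 = 0
    have h3' : (1 : R) + 1 + 1 = 0 := by
      obtain ⟨u, v, hu, hv, huv⟩ := h 1
      have hv' : v = 1 - u := by rw [huv]; abel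
      rw [hv'] at hv
      -- (1-u)^2 = 1 and u^2 = 1 give (1+1)u = 1
      have h2u : ((1 : R) + 1) * u = 1 := by
        linear_combination (norm := noncomm_ring) hu - hv
      linear_combination (norm := noncomm_ring)
        (((1:R)+1)*u + 1)*h2u - ((1:R)+1)*(((1:R)+1)*hu)
    have h3 : (3 : R) = 0 := by
      calc (3 : R) = 1 + 1 + 1 := by norm_num
        _ = 0 := h3'
    -- Step 2: anticommuting decomposition
    have hdec : ∀ a : R, ∃ d : R, a * d + d * a = 0 ∧ a ^ 2 + d ^ 2 = 1 := by
      intro a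
      obtain ⟨u, v, hu, hv, huv⟩ := h a
      refine ⟨u - v, ?_, ?_⟩
      · rw [huv]; linear_combination (norm := noncomm_ring) 2*hu - 2*hv
      · rw [huv]; linear_combination (norm := noncomm_ring) 2*hu + 2*hv + h3'
    -- Step 3: R is reduced
    have hred : ∀ g : R, g ^ 2 = 0 → g = 0 := by
      intro g hg
      obtain ⟨d, hd1, hd2⟩ := hdec (1 + g)
      have hdg : d ^ 2 = g := by
        linear_combination (norm := noncomm_ring) hd2 - hg - g*h3'
      have hgd : g * d + d * g = d := by
        linear_combination (norm := noncomm_ring) hd1 - d*h3'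
      -- g*d = d^3 = d*g, so d = 2 d^3 = -d^3
      have hd3 : d = - (d^3) := by
        linear_combination (norm := noncomm_ring)
          (-1)*hgd - hdg*d - d*hdg + (d^3)*h3'
      -- d^2 = -d^4 = -(d^2)^2 = -g^2 = 0
      have hd2z : d ^ 2 = 0 := by
        have h4 : d ^ 4 = 0 := by
          have : d^4 = (d^2)^2 := by noncomm_ring
          rw [this, hdg, hg]
        linear_combination (norm := noncomm_ring) hd3*d - h4
      rw [← hdg, hd2z]
    -- Step 4: involutions are central
    have hcen : ∀ u : R, u ^ 2 = 1 → ∀ r : R, u * r = r * u := by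
      intro u hu r
      set e : R := -1 - u with he_def
      have he : e * e = e := by
        rw [he_def]
        linear_combination (norm := noncomm_ring) hu + u*h3' + h3'
      have h1 : (1 - e) * e = 0 := by
        linear_combination (norm := noncomm_ring) - he
      have h2 : e * (1 - e) = 0 := by
        linear_combination (norm := noncomm_ring) - he
      have t1 : e * r * (1 - e) = 0 := by
        apply hred
        have : (e * r * (1 - e))^2 = e * r * ((1 - e) * e) * (r * (1 - e)) := by
          noncomm_ring
        rw [this, h1]; noncomm_ring
      have t2 : (1 - e) * r * e = 0 := by
        apply hred
        have : ((1 - e) * r * e)^2 = (1 - e) * r * (e * (1 - e)) * (r * e) := by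
          noncomm_ring
        rw [this, h2]; noncomm_ring
      have hre : e * r = r * e := by
        linear_combination (norm := noncomm_ring) t1 - t2
      have hue : u = -1 - e := by rw [he_def]; abel
      rw [hue]
      linear_combination (norm := noncomm_ring) - hre
    -- Step 5: R is commutative
    have hcomm : ∀ a b : R, a * b = b * a := by
      intro a b
      obtain ⟨u, v, hu, hv, huv⟩ := h a
      rw [huv, add_mul, mul_add, hcen u hu b, hcen v hv b]
    letI : CommRing R := { (inferInstance : Ring R) with mul_comm := hcomm }
    refine ⟨h3, fun x => ?_⟩
    obtain ⟨u, v, hu, hv, huv⟩ := h x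
    subst huv
    linear_combination u*hu + v*hv + (u^2*v + u*v^2)*h3
  · rintro ⟨h3, hc⟩ a
    have h4 : a ^ 4 = a ^ 2 := by
      have : a ^ 4 = a ^ 3 * a := by noncomm_ring
      rw [this, hc a]; noncomm_ring
    have h3' : (1 : R) + 1 + 1 = 0 := by
      calc (1:R) + 1 + 1 = 3 := by norm_num
        _ = 0 := h3
    refine ⟨1 - a - a^2, a^2 + 2*a - 1, ?_, ?_, by noncomm_ring⟩
    · linear_combination (norm := noncomm_ring) h4 + 2*(hc a)
    · linear_combination (norm := noncomm_ring) h4 + 4*(hc a) + (a^2)*h3'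
end

section
/- Let R be a ring. Then every element of R is a sum of three commuting involutions (a = u + v + w with u^2 = v^2 = w^2 = 1 and u, v, w pairwise commuting) if and only if 3 = 0 in R and R satisfies the identity x^3 = x (equivalently, R is a subdirect product of copies of Z_3). -/
lemma cube_add_of_comm {R : Type*} [Ring R] (x y : R) (h : x * y = y * x) :
    (x + y) ^ 3 = x ^ 3 + 3 * (x ^ 2 * y) + 3 * (x * y ^ 2) + y ^ 3 := by
  have f1 : x * (y * x) = x * (x * y) := congrArg (x * ·) h.symm
  have f3 : (y * x) * x = x * (x * y) := by
    calc (y * x) * x = (x * y) * x := congrArg (· * x) h.symm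
      _ = x * (y * x) := mul_assoc _ _ _
      _ = x * (x * y) := f1
  have f4 : y * (x * y) = x * (y * y) := by
    calc y * (x * y) = (y * x) * y := (mul_assoc _ _ _).symm
      _ = (x * y) * y := congrArg (· * y) h.symm
      _ = x * (y * y) := mul_assoc _ _ _
  have f5 : (y * y) * x = x * (y * y) := by
    calc (y * y) * x = y * (y * x) := mul_assoc _ _ _
      _ = y * (x * y) := congrArg (y * ·) h.symm
      _ = x * (y * y) := f4
  have e : (x + y) ^ 3 =
      x*x*x + x*x*y + x*(y*x) + x*(y*y) + (y*x)*x + y*(x*y) + (y*y)*x + y*y*y := by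
    noncomm_ring
  rw [e, f3, f1, f5, f4]
  noncomm_ring

/-- Every element of a ring `R` is a sum of three commuting involutions if and only if
`3 = 0` in `R` and `R` satisfies the identity `x^3 = x` (i.e. `R` is a subdirect product
of copies of `ℤ/3`). -/
theorem sum_three_commuting_involutions_iff (R : Type*) [Ring R] :
    (∀ a : R, ∃ u v w : R, u ^ 2 = 1 ∧ v ^ 2 = 1 ∧ w ^ 2 = 1 ∧
      u * v = v * u ∧ u * w = w * u ∧ v * w = w * v ∧ a = u + v + w) ↔
    ((3 : R) = 0 ∧ ∀ x : R, x ^ 3 = x) := by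
  constructor
  · intro h
    -- first: 3 = 0
    have h3 : (3 : R) = 0 := by
      obtain ⟨u, v, w, hu, hv, hw, huv, huw, hvw, h0⟩ := h 0
      have hw2 : w = -(u + v) := eq_neg_of_add_eq_zero_right h0.symm
      have ht : u * v * (u * v) = 1 := by
        have e : u * v * (u * v) = u * (v * u) * v := by noncomm_ring
        rw [e, ← huv]
        have e' : u * (u * v) * v = (u * u) * (v * v) := by noncomm_ring
        rw [e', show u * u = u ^ 2 from (pow_two u).symm,
          show v * v = v ^ 2 from (pow_two v).symm, hu, hv, one_mul]
      have h1 : (1 : R) = 2 + 2 * (u * v) := by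
        calc (1 : R) = w ^ 2 := hw.symm
          _ = (u + v) ^ 2 := by rw [hw2, neg_sq]
          _ = u * u + u * v + (v * u + v * v) := by
              rw [pow_two, add_mul, mul_add, mul_add]
          _ = 1 + u * v + (u * v + 1) := by
              rw [show u * u = u ^ 2 from (pow_two u).symm,
                show v * v = v ^ 2 from (pow_two v).symm, hu, hv, ← huv]
          _ = 2 + 2 * (u * v) := by
              rw [two_mul, show (2:R) = 1 + 1 from by norm_num]; abel
      have h2 : (2 : R) * (u * v) = -1 := by
        have e : (2 : R) * (u * v) = (2 + 2 * (u * v)) - 2 := by noncomm_ring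
        rw [e, ← h1]; norm_num
      have h5 : (2 : R) * (u * v) * (u * v) = -1 * (u * v) := by rw [h2]
      have h6 : -(u * v) = 2 := by
        have e : (2 : R) * (u * v) * (u * v) = 2 * (u * v * (u * v)) := by noncomm_ring
        rw [e, ht] at h5
        have e' : (-1 : R) * (u * v) = -(u * v) := by noncomm_ring
        rw [e'] at h5
        rw [← h5, mul_one]
      have h7 : u * v = -2 := by rw [← neg_neg (u*v), h6]
      rw [h7] at h2
      have e : (3 : R) = -(2 * (-2 : R)) + -1 := by norm_num
      rw [e, h2]; norm_num
    refine ⟨h3, fun a => ?_⟩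
    obtain ⟨u, v, w, hu, hv, hw, huv, huw, hvw, ha⟩ := h a
    have hsw : (u + v) * w = w * (u + v) := by
      rw [add_mul, mul_add, huw, hvw]
    have hu3 : u ^ 3 = u := by rw [pow_succ, hu, one_mul]
    have hv3 : v ^ 3 = v := by rw [pow_succ, hv, one_mul]
    have hw3 : w ^ 3 = w := by rw [pow_succ, hw, one_mul]
    rw [ha, cube_add_of_comm _ _ hsw, cube_add_of_comm _ _ huv, hu3, hv3, hw3, h3]
    simp
  · rintro ⟨h3, hcube⟩ a
    have h4 : a ^ 4 = a ^ 2 := by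
      rw [show (4:ℕ) = 3 + 1 from rfl, pow_succ, hcube, ← pow_two]
    refine ⟨a + 1 - a ^ 2, a ^ 2 + 1, 1, ?_, ?_, ?_, ?_, ?_, ?_, ?_⟩
    · have e1 : (a + 1 - a ^ 2) ^ 2 = a ^ 4 - 2 * a ^ 3 - a ^ 2 + 2 * a + 1 := by
        noncomm_ring
      rw [e1, h4, hcube]; noncomm_ring
    · have e2 : (a ^ 2 + 1) ^ 2 = a ^ 4 + 2 * a ^ 2 + 1 := by noncomm_ring
      rw [e2, h4]
      have e : a ^ 2 + 2 * a ^ 2 + 1 = 3 * a ^ 2 + 1 := by noncomm_ring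
      rw [e, h3, zero_mul, zero_add]
    · rw [one_pow]
    · noncomm_ring
    · noncomm_ring
    · noncomm_ring
    · have e : (a + 1 - a ^ 2) + (a ^ 2 + 1) + 1 = a + 3 := by
        rw [show (3:R) = 1 + 1 + 1 from by norm_num]; abel
      rw [e, h3, add_zero]
end
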